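/- arXiv:1804.00764 — 7 statements merged into one kernel-verified Lean document; each statement's English description precedes it below -/
import Mathlib

section
/- For every t ∈ (0,1), P(X_k ≥ t) → 1 as k → ∞. -/
open MeasureTheory ProbabilityTheory Filter Topology
open scoped ENNReal

/-!
On the event `X k < t` the product `∏ (1 - δ Cⱼ)` exceeds `1 - t`. Markov's inequality for the
square root of the product, whose expectation factorizes by independence into `r ^ k` with
`r = (√(1 - δ) + √(1 + δ)) / 2`, bounds the probability of this event by `r ^ k / √(1 - t)`;
strict concavity of the square root gives `r < 1`.
-/

theorem Real.sqrt_one_sub_add_sqrt_one_add_lt_two {δ : ℝ} (hδ : δ ≠ 0) (hδ1 : |δ| ≤ 1) :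
    √(1 - δ) + √(1 + δ) < 2 := by
  obtain ⟨hδl, hδu⟩ := abs_le.mp hδ1
  have ha : √(1 - δ) ^ 2 = 1 - δ := Real.sq_sqrt (by linarith)
  have hb : √(1 + δ) ^ 2 = 1 + δ := Real.sq_sqrt (by linarith)
  have hne : √(1 - δ) ≠ √(1 + δ) := fun h => hδ (by
    have := congrArg (· ^ 2) h
    simp only [ha, hb] at this
    linarith)
  have hgap : 0 < (√(1 - δ) - √(1 + δ)) ^ 2 := by positivity [sub_ne_zero.mpr hne]
  nlinarith [Real.sqrt_nonneg (1 - δ), Real.sqrt_nonneg (1 + δ)]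

section TwoPoint

variable {Ω β : Type*} [MeasurableSpace Ω] [MeasurableSpace β] [MeasurableSingletonClass β]
  {μ : Measure Ω} {f : Ω → β} {a b : β}

theorem ae_eq_or_eq_of_measure_add_measure_eq_one [IsProbabilityMeasure μ] (hf : Measurable f)
    (hab : a ≠ b) (h : μ {ω | f ω = a} + μ {ω | f ω = b} = 1) :
    ∀ᵐ ω ∂μ, f ω = a ∨ f ω = b := by
  have hA : MeasurableSet {ω | f ω = a} := hf (measurableSet_singleton a)
  have hB : MeasurableSet {ω | f ω = b} := hf (measurableSet_singleton b)
  have hdisj : Disjoint {ω | f ω = a} {ω | f ω = b} :=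
    Set.disjoint_left.mpr fun ω ha hb => hab (ha.symm.trans hb)
  have hcompl : {ω | ¬(f ω = a ∨ f ω = b)} = ({ω | f ω = a} ∪ {ω | f ω = b})ᶜ := by
    ext ω; simp
  rw [ae_iff, hcompl, prob_compl_eq_one_sub (hA.union hB), measure_union hdisj hB, h, tsub_self]

theorem lintegral_comp_eq_of_ae_eq_or_eq (hf : Measurable f) (hab : a ≠ b)
    (h : ∀ᵐ ω ∂μ, f ω = a ∨ f ω = b) (g : β → ℝ≥0∞) :
    ∫⁻ ω, g (f ω) ∂μ = g a * μ {ω | f ω = a} + g b * μ {ω | f ω = b} := by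
  have hA : MeasurableSet {ω | f ω = a} := hf (measurableSet_singleton a)
  have hB : MeasurableSet {ω | f ω = b} := hf (measurableSet_singleton b)
  calc ∫⁻ ω, g (f ω) ∂μ
      = ∫⁻ ω, {ω | f ω = a}.indicator (fun _ => g a) ω
          + {ω | f ω = b}.indicator (fun _ => g b) ω ∂μ := by
        refine lintegral_congr_ae ?_
        filter_upwards [h] with ω hω
        rcases hω with hω | hω <;> simp [hω, hab, hab.symm]
    _ = g a * μ {ω | f ω = a} + g b * μ {ω | f ω = b} := by
        rw [lintegral_add_left (measurable_const.indicator hA), lintegral_indicator_const hA,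
          lintegral_indicator_const hB]

end TwoPoint

section Markov

variable {Ω ι : Type*} [MeasurableSpace Ω] {μ : Measure Ω}

theorem ProbabilityTheory.iIndepFun.measure_le_prod_le {Z : ι → Ω → ℝ} (hind : iIndepFun Z μ)
    (hZ : ∀ i, Measurable (Z i)) (s : Finset ι) (hnonneg : ∀ i ∈ s, ∀ᵐ ω ∂μ, 0 ≤ Z i ω)
    {c : ℝ} (hc : 0 < c) :
    μ {ω | c ≤ ∏ i ∈ s, Z i ω}
      ≤ (∏ i ∈ s, ∫⁻ ω, ENNReal.ofReal √(Z i ω) ∂μ) / ENNReal.ofReal √c := by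
  have hmeas : ∀ i, Measurable fun ω => ENNReal.ofReal √(Z i ω) :=
    fun i => (hZ i).sqrt.ennreal_ofReal
  have hind' : iIndepFun (fun i ω => ENNReal.ofReal √(Z i ω)) μ :=
    hind.comp _ fun _ => measurable_id.sqrt.ennreal_ofReal
  calc μ {ω | c ≤ ∏ i ∈ s, Z i ω}
      ≤ μ {ω | ENNReal.ofReal √c ≤ ∏ i ∈ s, ENNReal.ofReal √(Z i ω)} := by
        refine measure_mono_ae ?_
        filter_upwards [(eventually_all_finset s).mpr hnonneg] with ω hω hle
        change c ≤ _ at hle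
        change _ ≤ _
        rw [← ENNReal.ofReal_prod_of_nonneg fun i _ => Real.sqrt_nonneg _,
          ← Real.sqrt_prod s hω]
        exact ENNReal.ofReal_le_ofReal (Real.sqrt_le_sqrt hle)
    _ ≤ (∫⁻ ω, ∏ i ∈ s, ENNReal.ofReal √(Z i ω) ∂μ) / ENNReal.ofReal √c :=
        meas_ge_le_lintegral_div (s.measurable_prod fun i _ => hmeas i).aemeasurable
          (by simpa using hc) ENNReal.ofReal_ne_top
    _ = _ := by rw [lintegral_prod_eq_prod_lintegral_of_indepFun s _ hind' hmeas]

end Markov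

section FairSigns

variable {Ω : Type*} [MeasurableSpace Ω] {μ : Measure Ω} [IsProbabilityMeasure μ]

theorem ae_eq_one_or_eq_neg_one {C : Ω → ℝ} (hC : Measurable C)
    (hHead : μ {ω | C ω = 1} = 1 / 2) (hTail : μ {ω | C ω = -1} = 1 / 2) :
    ∀ᵐ ω ∂μ, C ω = 1 ∨ C ω = -1 :=
  ae_eq_or_eq_of_measure_add_measure_eq_one hC (by norm_num)
    (by rw [hHead, hTail, ENNReal.add_halves])

theorem lintegral_ofReal_sqrt_one_sub_mul {C : Ω → ℝ} (hC : Measurable C)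
    (hHead : μ {ω | C ω = 1} = 1 / 2) (hTail : μ {ω | C ω = -1} = 1 / 2) (δ : ℝ) :
    ∫⁻ ω, ENNReal.ofReal √(1 - δ * C ω) ∂μ = ENNReal.ofReal ((√(1 - δ) + √(1 + δ)) / 2) := by
  rw [lintegral_comp_eq_of_ae_eq_or_eq (g := fun x => ENNReal.ofReal √(1 - δ * x)) hC
    (by norm_num) (ae_eq_one_or_eq_neg_one hC hHead hTail), hHead, hTail,
    ENNReal.ofReal_div_of_pos two_pos, ENNReal.ofReal_add (Real.sqrt_nonneg _)
    (Real.sqrt_nonneg _)]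
  simp [div_eq_mul_inv, sub_eq_add_neg, add_mul]

theorem tendsto_measure_le_prod_one_sub_mul {C : ℕ → Ω → ℝ} (hC : ∀ j, Measurable (C j))
    (hIndep : iIndepFun C μ) (hHead : ∀ j, μ {ω | C j ω = 1} = 1 / 2)
    (hTail : ∀ j, μ {ω | C j ω = -1} = 1 / 2) {δ : ℝ} (hδ : δ ≠ 0) (hδ1 : |δ| ≤ 1)
    {c : ℝ} (hc : 0 < c) :
    Tendsto (fun k => μ {ω | c ≤ ∏ j ∈ Finset.Icc 1 k, (1 - δ * C j ω)}) atTop (𝓝 0) := by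
  set r := (√(1 - δ) + √(1 + δ)) / 2
  have hr : ENNReal.ofReal r < 1 := by
    rw [ENNReal.ofReal_lt_one]
    show (√(1 - δ) + √(1 + δ)) / 2 < 1
    linarith [Real.sqrt_one_sub_add_sqrt_one_add_lt_two hδ hδ1]
  have hnonneg : ∀ j, ∀ᵐ ω ∂μ, 0 ≤ 1 - δ * C j ω := fun j => by
    filter_upwards [ae_eq_one_or_eq_neg_one (hC j) (hHead j) (hTail j)] with ω hω
    rcases hω with hω | hω <;> simp only [hω] <;> linarith [abs_le.mp hδ1]
  have hbound : ∀ k, μ {ω | c ≤ ∏ j ∈ Finset.Icc 1 k, (1 - δ * C j ω)}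
      ≤ ENNReal.ofReal r ^ k / ENNReal.ofReal √c := fun k => by
    calc _ ≤ _ := (hIndep.comp (fun _ x => 1 - δ * x) fun _ => by fun_prop).measure_le_prod_le
          (fun j => by fun_prop) (Finset.Icc 1 k) (fun j _ => hnonneg j) hc
      _ = _ := by
        simp only [Function.comp_apply, r, Finset.prod_const, Nat.card_Icc, add_tsub_cancel_right,
          lintegral_ofReal_sqrt_one_sub_mul (hC _) (hHead _) (hTail _)]
  have hlim : Tendsto (fun k => ENNReal.ofReal r ^ k / ENNReal.ofReal √c) atTop (𝓝 0) := by
    simpa using ENNReal.Tendsto.div_const (b := ENNReal.ofReal √c)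
      (ENNReal.tendsto_pow_atTop_nhds_zero_of_lt_one hr) (Or.inr (by simpa using hc))
  exact tendsto_of_tendsto_of_tendsto_of_le_of_le tendsto_const_nhds hlim
    (fun _ => zero_le) hbound

end FairSigns

/-- For the CPDO net capital driven by i.i.d. fair signs with `δ = 0.01`:
for every `t ∈ (0,1)`, `P(X k ≥ t) → 1` as `k → ∞`. -/
theorem cpdo_eventual_near_cash_in
    {Ω : Type*} [MeasureSpace Ω] [IsProbabilityMeasure (ℙ : Measure Ω)]
    (δ : ℝ) (hδ : δ = 0.01)
    (C : ℕ → Ω → ℝ)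
    (hMeas : ∀ j, Measurable (C j))
    (hIndep : iIndepFun C ℙ)
    (hHead : ∀ j, ℙ {ω | C j ω = 1} = 1/2)
    (hTail : ∀ j, ℙ {ω | C j ω = -1} = 1/2)
    (X : ℕ → Ω → ℝ)
    (hX : ∀ (k : ℕ) (ω : Ω), X k ω = 1 - ∏ j ∈ Finset.Icc 1 k, (1 - δ * C j ω)) :
    ∀ t : ℝ, t ∈ Set.Ioo (0 : ℝ) 1 →
      Tendsto (fun k : ℕ => ℙ {ω | t ≤ X k ω}) atTop (nhds 1) := by
  rintro t ⟨-, ht1⟩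
  set bad := fun k => {ω | 1 - t < ∏ j ∈ Finset.Icc 1 k, (1 - δ * C j ω)}
  have hgood : ∀ k, {ω | t ≤ X k ω} = (bad k)ᶜ := fun k => by
    ext ω
    simp only [Set.mem_ofPred_eq, Set.mem_compl_iff, bad, hX, not_lt]
    constructor <;> intro h <;> linarith
  have hbad_meas : ∀ k, MeasurableSet (bad k) := fun k =>
    measurableSet_lt measurable_const (by fun_prop)
  have hbad : Tendsto (fun k => ℙ (bad k)) atTop (𝓝 0) :=
    tendsto_of_tendsto_of_tendsto_of_le_of_le tendsto_const_nhds
      (tendsto_measure_le_prod_one_sub_mul (δ := δ) hMeas hIndep hHead hTail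
        (by norm_num [hδ]) (by norm_num [hδ]) (sub_pos.mpr ht1))
      (fun _ => zero_le) fun _ => measure_mono (Set.ofPred_subset_ofPred.mpr fun _ => le_of_lt)
  simp only [hgood, prob_compl_eq_one_sub (hbad_meas _)]
  simpa using ENNReal.Tendsto.sub tendsto_const_nhds hbad (Or.inl ENNReal.one_ne_top)
end

section
/- For every integer m with 0 ≤ m ≤ 99, P(X_{2m+1} < 0) = 1/2. -/
/-!
Almost surely every `C j` is `±1`, and then with `a` factors `0.99` and `b` factors `1.01` the
capital is `1 - 0.99 ^ a * 1.01 ^ b`. A pair of opposite moves only costs a factor `0.9999`, and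
`0.9999 ^ 99 * 1.01 > 1`, so as long as `a + b ≤ 199` the capital is negative exactly when
`a < b`, i.e. when the walk `∑ C j` is negative. The law of the sign sequence is invariant under
`C ↦ -C`, so the walk is as likely negative as positive, and after an odd number of steps it is
never zero.
-/

open MeasureTheory ProbabilityTheory

open scoped Finset

theorem MeasureTheory.Measure.ext_of_ae_mem_finset {α : Type*} [MeasurableSpace α]
    [MeasurableSingletonClass α] {μ ν : Measure α} {s : Finset α}
    (hμ : ∀ᵐ x ∂μ, x ∈ s) (hν : ∀ᵐ x ∂ν, x ∈ s) (h : ∀ a ∈ s, μ {a} = ν {a}) : μ = ν := by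
  classical
  rw [← Measure.restrict_eq_self_of_ae_mem hμ, ← Measure.restrict_eq_self_of_ae_mem hν]
  ext t ht
  have hts : t ∩ ↑s = ↑(s.filter (· ∈ t)) := by ext; simp [and_comm]
  rw [Measure.restrict_apply ht, Measure.restrict_apply ht, hts, ← sum_measure_singleton,
    ← sum_measure_singleton]
  exact Finset.sum_congr rfl fun a ha ↦ h a (Finset.mem_filter.1 ha).1

section FairSign

variable {ν : Measure ℝ} [IsProbabilityMeasure ν]

theorem MeasureTheory.Measure.ae_eq_one_or_eq_neg_one (h₁ : ν {1} = 1 / 2)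
    (h₂ : ν {-1} = 1 / 2) :
    ∀ᵐ x ∂ν, x = 1 ∨ x = -1 := by
  have hpair : ν ↑({1, -1} : Finset ℝ) = 1 := by
    rw [← sum_measure_singleton, Finset.sum_pair (by norm_num), h₁, h₂, ENNReal.add_halves]
  have hcompl : ν (↑({1, -1} : Finset ℝ))ᶜ = 0 := by
    rw [measure_compl (Finset.measurableSet _) (measure_ne_top _ _), hpair, measure_univ,
      tsub_self]
  exact ae_iff.2 (by convert hcompl using 2; ext x; simp)

theorem MeasureTheory.Measure.map_neg_eq_self_of_fair_sign (h₁ : ν {1} = 1 / 2)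
    (h₂ : ν {-1} = 1 / 2) :
    ν.map Neg.neg = ν := by
  have hmap (a : ℝ) : ν.map Neg.neg {a} = ν {-a} := by
    rw [Measure.map_apply measurable_neg (measurableSet_singleton a)]
    congr 1
    ext x
    simp
  refine Measure.ext_of_ae_mem_finset (s := {1, -1}) ?_ ?_ ?_
  · refine (ae_map_iff measurable_neg.aemeasurable (Finset.measurableSet {1, -1})).2 ?_
    filter_upwards [ν.ae_eq_one_or_eq_neg_one h₁ h₂] with x hx
    rcases hx with rfl | rfl <;> simp
  · filter_upwards [ν.ae_eq_one_or_eq_neg_one h₁ h₂] with x hx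
    simpa using hx
  · intro a ha
    simp only [Finset.mem_insert, Finset.mem_singleton] at ha
    rcases ha with rfl | rfl <;> simp [hmap, h₁, h₂]

end FairSign

section SignSums

variable {ι : Type*} {S : Finset ι} {c : ι → ℝ}

@[to_additive]
theorem Finset.prod_comp_eq_pow_mul_pow_of_sign {M : Type*} [CommMonoid M] (f : ℝ → M)
    (hc : ∀ j ∈ S, c j = 1 ∨ c j = -1) :
    ∏ j ∈ S, f (c j) = f 1 ^ #{j ∈ S | c j = 1} * f (-1) ^ #{j ∈ S | c j ≠ 1} := by
  rw [← Finset.prod_filter_mul_prod_filter_not S (fun j ↦ c j = 1)]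
  congr 1
  · exact Finset.prod_eq_pow_card fun j hj ↦ by rw [(Finset.mem_filter.1 hj).2]
  · refine Finset.prod_eq_pow_card fun j hj ↦ ?_
    obtain ⟨hjS, hj1⟩ := Finset.mem_filter.1 hj
    rw [(hc j hjS).resolve_left hj1]

theorem Finset.sum_ne_zero_of_sign_of_odd_card (hc : ∀ j ∈ S, c j = 1 ∨ c j = -1) (hS : Odd #S) :
    ∑ j ∈ S, c j ≠ 0 := by
  have hcard : #{j ∈ S | c j = 1} + #{j ∈ S | c j ≠ 1} = #S :=
    Finset.card_filter_add_card_filter_not _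
  have hsum : ∑ j ∈ S, c j = _ := Finset.sum_comp_eq_nsmul_add_nsmul_of_sign id hc
  simp only [id, nsmul_eq_mul, mul_one, mul_neg] at hsum
  intro h0
  have heq : (#{j ∈ S | c j = 1} : ℝ) = #{j ∈ S | c j ≠ 1} := by linarith
  rw [← hcard, Nat.cast_injective heq] at hS
  exact Nat.not_odd_iff_even.2 (Even.add_self _) hS

theorem one_lt_0_99_pow_mul_1_01_pow_iff {a b : ℕ} (hab : a + b ≤ 199) :
    1 < (0.99 : ℝ) ^ a * 1.01 ^ b ↔ a < b := by
  have hpair (k : ℕ) : (0.99 : ℝ) ^ k * 1.01 ^ k = 0.9999 ^ k := by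
    rw [← mul_pow]; norm_num
  constructor
  · intro h
    by_contra! hba
    obtain ⟨d, rfl⟩ := Nat.exists_eq_add_of_le hba
    rw [pow_add, mul_right_comm, hpair] at h
    have h₁ : (0.9999 : ℝ) ^ b ≤ 1 := pow_le_one₀ (by norm_num) (by norm_num)
    have h₂ : (0.99 : ℝ) ^ d ≤ 1 := pow_le_one₀ (by norm_num) (by norm_num)
    nlinarith [pow_nonneg (by norm_num : (0 : ℝ) ≤ 0.99) d]
  · intro h
    obtain ⟨d, rfl⟩ := Nat.exists_eq_add_of_lt h
    rw [add_assoc, pow_add, ← mul_assoc, hpair]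
    have h₁ : (0.9999 : ℝ) ^ 99 ≤ 0.9999 ^ a :=
      pow_le_pow_of_le_one (by norm_num) (by norm_num) (by omega)
    have h₂ : (1.01 : ℝ) ≤ 1.01 ^ (d + 1) := le_self_pow₀ (by norm_num) (by omega)
    calc (1 : ℝ) < 0.9999 ^ 99 * 1.01 := by norm_num
      _ ≤ 0.9999 ^ a * 1.01 ^ (d + 1) := mul_le_mul h₁ h₂ (by norm_num) (by positivity)

theorem one_lt_prod_iff_sum_neg (hc : ∀ j ∈ S, c j = 1 ∨ c j = -1) (hS : #S ≤ 199) :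
    1 < ∏ j ∈ S, (1 - 0.01 * c j) ↔ ∑ j ∈ S, c j < 0 := by
  have hcard : #{j ∈ S | c j = 1} + #{j ∈ S | c j ≠ 1} = #S :=
    Finset.card_filter_add_card_filter_not _
  have hsum : ∑ j ∈ S, c j = _ := Finset.sum_comp_eq_nsmul_add_nsmul_of_sign id hc
  rw [Finset.prod_comp_eq_pow_mul_pow_of_sign (fun x ↦ 1 - 0.01 * x) hc, hsum,
    show (1 : ℝ) - 0.01 * 1 = 0.99 by norm_num, show (1 : ℝ) - 0.01 * -1 = 1.01 by norm_num,
    one_lt_0_99_pow_mul_1_01_pow_iff (by omega)]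
  simp

end SignSums

section RademacherSequence

variable {ι Ω : Type*} [MeasurableSpace Ω] {μ : Measure Ω} [IsProbabilityMeasure μ]

section FairSignVariable

variable {X : Ω → ℝ} (hX : Measurable X) (h₁ : μ {ω | X ω = 1} = 1 / 2)
  (h₂ : μ {ω | X ω = -1} = 1 / 2)
include hX h₁ h₂

theorem ae_eq_one_or_eq_neg_one_of_fair_sign :
    ∀ᵐ ω ∂μ, X ω = 1 ∨ X ω = -1 := by
  have := Measure.isProbabilityMeasure_map (μ := μ) hX.aemeasurable
  refine ae_of_ae_map hX.aemeasurable (Measure.ae_eq_one_or_eq_neg_one ?_ ?_)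
  · rwa [Measure.map_apply hX (measurableSet_singleton _)]
  · rwa [Measure.map_apply hX (measurableSet_singleton _)]

theorem map_neg_eq_map_of_fair_sign : μ.map (fun ω ↦ -X ω) = μ.map X := by
  have := Measure.isProbabilityMeasure_map (μ := μ) hX.aemeasurable
  refine (Measure.map_map measurable_neg hX).symm.trans (Measure.map_neg_eq_self_of_fair_sign ?_ ?_)
  · rwa [Measure.map_apply hX (measurableSet_singleton _)]
  · rwa [Measure.map_apply hX (measurableSet_singleton _)]

end FairSignVariable

variable {C : ι → Ω → ℝ}

theorem ae_forall_mem_eq_one_or_eq_neg_one (hMeas : ∀ j, Measurable (C j))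
    (h₁ : ∀ j, μ {ω | C j ω = 1} = 1 / 2) (h₂ : ∀ j, μ {ω | C j ω = -1} = 1 / 2) (S : Finset ι) :
    ∀ᵐ ω ∂μ, ∀ j ∈ S, C j ω = 1 ∨ C j ω = -1 :=
  (Filter.eventually_all_finset S).2 fun j _ ↦
    ae_eq_one_or_eq_neg_one_of_fair_sign (hMeas j) (h₁ j) (h₂ j)

variable (hMeas : ∀ j, Measurable (C j)) (hIndep : iIndepFun C μ)
  (h₁ : ∀ j, μ {ω | C j ω = 1} = 1 / 2) (h₂ : ∀ j, μ {ω | C j ω = -1} = 1 / 2)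
include hMeas hIndep h₁ h₂

theorem map_neg_fun_eq_map_fun :
    μ.map (fun ω j ↦ -C j ω) = μ.map (fun ω j ↦ C j ω) := by
  have hneg : iIndepFun (fun j ↦ Neg.neg ∘ C j) μ := hIndep.comp _ fun _ ↦ measurable_neg
  refine (hneg.map_fun_eq_infinitePi_map fun j ↦ (hMeas j).neg).trans ?_
  rw [hIndep.map_fun_eq_infinitePi_map hMeas]
  congr 1
  funext j
  exact map_neg_eq_map_of_fair_sign (hMeas j) (h₁ j) (h₂ j)

theorem measure_sum_neg_eq_half {S : Finset ι} (hS : Odd #S) :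
    μ {ω | ∑ j ∈ S, C j ω < 0} = 1 / 2 := by
  set F : Set (ι → ℝ) := {x | ∑ j ∈ S, x j < 0}
  have hF : MeasurableSet F :=
    measurableSet_lt (Finset.measurable_sum S fun j _ ↦ measurable_pi_apply j) measurable_const
  have hC : Measurable fun ω j ↦ C j ω := measurable_pi_lambda _ hMeas
  have hnegC : Measurable fun ω j ↦ -C j ω := measurable_pi_lambda _ fun j ↦ (hMeas j).neg
  have hsymm : μ {ω | 0 < ∑ j ∈ S, C j ω} = μ {ω | ∑ j ∈ S, C j ω < 0} := by
    have hpos : {ω | 0 < ∑ j ∈ S, C j ω} = (fun ω j ↦ -C j ω) ⁻¹' F := by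
      ext ω; simp [F]
    rw [hpos, ← Measure.map_apply hnegC hF,
      map_neg_fun_eq_map_fun hMeas hIndep h₁ h₂, Measure.map_apply hC hF]
    rfl
  have hcompl : ({ω | ∑ j ∈ S, C j ω < 0}ᶜ : Set Ω) =ᵐ[μ] {ω | 0 < ∑ j ∈ S, C j ω} := by
    refine Filter.eventuallyEq_set.2 ?_
    filter_upwards [ae_forall_mem_eq_one_or_eq_neg_one hMeas h₁ h₂ S] with ω hω
    simp [(Finset.sum_ne_zero_of_sign_of_odd_card hω hS).symm.le_iff_lt]
  have hmeas : MeasurableSet {ω | ∑ j ∈ S, C j ω < 0} := hC hF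
  have htotal : μ {ω | ∑ j ∈ S, C j ω < 0} + μ {ω | ∑ j ∈ S, C j ω < 0} = 1 := by
    nth_rewrite 2 [← hsymm]
    rw [← measure_congr hcompl, measure_add_measure_compl hmeas, measure_univ]
  rw [ENNReal.eq_div_iff two_ne_zero ENNReal.ofNat_ne_top, two_mul, htotal]

end RademacherSequence

/-- For the CPDO net capital driven by i.i.d. fair signs with `δ = 0.01`:
for every `0 ≤ m ≤ 99`, `P(X (2m+1) < 0) = 1/2`. -/
theorem cpdo_odd_loss_probability
    {Ω : Type*} [MeasureSpace Ω] [IsProbabilityMeasure (ℙ : Measure Ω)]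
    (δ : ℝ) (hδ : δ = 0.01)
    (C : ℕ → Ω → ℝ)
    (hMeas : ∀ j, Measurable (C j))
    (hIndep : iIndepFun C ℙ)
    (hHead : ∀ j, ℙ {ω | C j ω = 1} = 1/2)
    (hTail : ∀ j, ℙ {ω | C j ω = -1} = 1/2)
    (X : ℕ → Ω → ℝ)
    (hX : ∀ (k : ℕ) (ω : Ω), X k ω = 1 - ∏ j ∈ Finset.Icc 1 k, (1 - δ * C j ω)) :
    ∀ m : ℕ, m ≤ 99 →
      (ℙ {ω | X (2 * m + 1) ω < 0}).toReal = 1 / 2 := by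
  subst hδ
  intro m hm
  have hloss : {ω | X (2 * m + 1) ω < 0}
      =ᵐ[ℙ] {ω | ∑ j ∈ Finset.Icc 1 (2 * m + 1), C j ω < 0} := by
    refine Filter.eventuallyEq_set.2 ?_
    filter_upwards [ae_forall_mem_eq_one_or_eq_neg_one hMeas hHead hTail _] with ω hω
    rw [hX, sub_neg, one_lt_prod_iff_sum_neg hω (by simp; omega)]
  rw [measure_congr hloss, measure_sum_neg_eq_half hMeas hIndep hHead hTail (by simp)]
  norm_num
end

section
/- For every integer m with 1 ≤ m ≤ 199, P(X_{2m} < 0 | X_1 < 0) = 1/2, where the conditioning event X_1 < 0 has probability 1/2 > 0. -/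
/-!
Almost surely every `C j` is `±1`, so if `b` signs among `C 1, …, C n` are `-1` then
`1 - X n = 1.01 ^ b * 0.99 ^ (n - b)`. For `n = 2 m` with `m ≤ 199` this exceeds `1` exactly when
`b > m`. Hence `X 1 < 0 ∧ X (2 m) < 0` says that `1` is among the `-1` indices and so are at
least `m` of the other `2 m - 1` indices; complementation inside those `2 m - 1` indices shows that
a quarter of all sign patterns qualify, and each pattern has probability `2 ^ (-2 m)`.
-/

open MeasureTheory ProbabilityTheory Finset

namespace Finset

variable {α : Type*}

theorem card_powerset_filter_lt_card_of_card_eq_odd (T : Finset α) {k : ℕ}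
    (hT : #T = 2 * k + 1) : #(T.powerset.filter (fun t => k < #t)) = 4 ^ k := by
  classical
  have hcompl : #(T.powerset.filter (fun t => k < #t)) =
      #(T.powerset.filter (fun t => ¬ k < #t)) := by
    refine card_nbij' (T \ ·) (T \ ·) ?_ ?_ ?_ ?_ <;> intro t ht <;>
      simp only [coe_filter, mem_powerset, Set.mem_ofPred_eq] at ht ⊢ <;>
      grind [card_sdiff_of_subset, card_le_card, sdiff_sdiff_eq_self]
  have hsum := card_filter_add_card_filter_not (s := T.powerset) (fun t => k < #t)
  rw [← hcompl, card_powerset, hT, pow_succ, pow_mul] at hsum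
  norm_num at hsum
  omega

theorem card_powerset_insert_filter_mem [DecidableEq α] {a : α} {T : Finset α} (ha : a ∉ T)
    (p : Finset α → Prop) [DecidablePred p] :
    #((insert a T).powerset.filter (fun s => a ∈ s ∧ p s)) =
      #(T.powerset.filter (fun t => p (insert a t))) := by
  refine card_nbij' (·.erase a) (insert a) ?_ ?_ ?_ ?_ <;> intro t ht <;>
    simp only [coe_filter, mem_powerset, Set.mem_ofPred_eq] at ht ⊢ <;>
    grind [insert_erase, erase_insert]

end Finset

theorem card_powerset_Icc_filter_one_mem_and_lt_card (k : ℕ) :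
    #((Icc 1 (2 * (k + 1))).powerset.filter (fun s => 1 ∈ s ∧ k + 1 < #s)) = 4 ^ k := by
  rw [← insert_Icc_add_one_left_eq_Icc (by omega), card_powerset_insert_filter_mem (by simp),
    filter_congr fun t ht => by
      rw [card_insert_of_notMem fun h => by simpa using mem_powerset.1 ht h, add_lt_add_iff_right],
    card_powerset_filter_lt_card_of_card_eq_odd]
  rw [Nat.card_Icc]
  omega

theorem pow_mul_pow_sub_le_one {m b : ℕ} (hb : b ≤ m) :
    (1.01 : ℝ) ^ b * 0.99 ^ (2 * m - b) ≤ 1 := by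
  obtain ⟨k, rfl⟩ := Nat.exists_eq_add_of_le hb
  rw [show 2 * (b + k) - b = b + 2 * k by omega, pow_add, pow_mul, ← mul_assoc, ← mul_pow]
  exact mul_le_one₀ (pow_le_one₀ (by norm_num) (by norm_num)) (by positivity)
    (pow_le_one₀ (by norm_num) (by norm_num))

theorem one_lt_pow_mul_pow_sub {m b : ℕ} (hm : m ≤ 199) (hb : m < b) (hb' : b ≤ 2 * m) :
    1 < (1.01 : ℝ) ^ b * 0.99 ^ (2 * m - b) := by
  obtain ⟨r, k, rfl, hr, hk⟩ : ∃ r k, b = r + 2 * (k + 1) ∧ 2 * m - b = r ∧ r ≤ 198 :=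
    ⟨2 * m - b, b - m - 1, by omega, rfl, by omega⟩
  rw [hr, pow_add, pow_mul, mul_right_comm, ← mul_pow]
  -- `1.01 ^ 2 * 0.9999 ^ 198 > 1` but `1.01 ^ 2 * 0.9999 ^ 199 < 1`: this is why `m ≤ 199`.
  calc (1 : ℝ) < (1.01 * 0.99) ^ 198 * 1.01 ^ 2 := by norm_num
    _ ≤ (1.01 * 0.99) ^ r * (1.01 ^ 2) ^ (k + 1) := by
      gcongr ?_ * ?_
      · exact pow_le_pow_of_le_one (by norm_num) (by norm_num) hk
      · exact le_self_pow₀ (by norm_num) (by omega)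

theorem one_lt_pow_mul_pow_sub_iff {m b : ℕ} (hm : m ≤ 199) (hb : b ≤ 2 * m) :
    1 < (1.01 : ℝ) ^ b * 0.99 ^ (2 * m - b) ↔ m < b := by
  refine ⟨fun h => ?_, fun h => one_lt_pow_mul_pow_sub hm h hb⟩
  by_contra! h'
  exact h.not_ge (pow_mul_pow_sub_le_one h')

theorem prod_one_sub_mul_of_sign (δ : ℝ) {c : ℕ → ℝ} (I : Finset ℕ)
    (hc : ∀ j ∈ I, c j = 1 ∨ c j = -1) :
    ∏ j ∈ I, (1 - δ * c j) =
      (1 + δ) ^ #(I.filter (c · = -1)) * (1 - δ) ^ (#I - #(I.filter (c · = -1))) := by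
  classical
  rw [prod_congr rfl fun j hj => (?_ : 1 - δ * c j = if c j = -1 then 1 + δ else 1 - δ),
    prod_ite, prod_const, prod_const, ← card_filter_add_card_filter_not (s := I) (c · = -1),
    Nat.add_sub_cancel_left]
  rcases hc j hj with h | h <;> norm_num [h]

noncomputable def negIndices {Ω : Type*} (C : ℕ → Ω → ℝ) (I : Finset ℕ) (ω : Ω) :
    Finset ℕ :=
  I.filter (C · ω = -1)

section FairSigns

variable {Ω : Type*} [MeasureSpace Ω] {C : ℕ → Ω → ℝ}

theorem measurable_negIndices (hMeas : ∀ j, Measurable (C j)) (I : Finset ℕ) :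
    Measurable (negIndices C I) := by
  refine measurable_finset_iff.2 fun j => ?_
  simp only [negIndices, mem_filter]
  have := hMeas j
  fun_prop

theorem ae_eq_one_or_neg_one [IsProbabilityMeasure (ℙ : Measure Ω)]
    (hMeas : ∀ j, Measurable (C j))
    (hHead : ∀ j, ℙ {ω | C j ω = 1} = 1/2) (hTail : ∀ j, ℙ {ω | C j ω = -1} = 1/2) :
    ∀ᵐ ω, ∀ j, C j ω = 1 ∨ C j ω = -1 := by
  refine ae_all_iff.2 fun j => ?_
  have hdisj : Disjoint {ω | C j ω = 1} {ω | C j ω = -1} :=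
    Set.disjoint_left.2 fun ω (h1 : C j ω = 1) (h2 : C j ω = -1) => by linarith
  have hunion : ℙ ({ω | C j ω = 1} ∪ {ω | C j ω = -1}) = 1 := by
    rw [measure_union hdisj (hMeas j (measurableSet_singleton _)), hHead, hTail,
      ENNReal.add_halves]
  exact (prob_compl_eq_zero_iff (by measurability)).2 hunion

theorem negIndices_ae_eq_cylinder (hsign : ∀ᵐ ω, ∀ j, C j ω = 1 ∨ C j ω = -1)
    {I s : Finset ℕ} (hs : s ⊆ I) :
    negIndices C I ⁻¹' {s} =ᵐ[ℙ] ⋂ j ∈ I, C j ⁻¹' {if j ∈ s then -1 else 1} := by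
  rw [Filter.eventuallyEq_set]
  filter_upwards [hsign] with ω hω
  simp only [negIndices, Set.mem_preimage, Set.mem_singleton_iff, Set.mem_iInter,
    Finset.ext_iff]
  grind

theorem measure_negIndices_eq (hsign : ∀ᵐ ω, ∀ j, C j ω = 1 ∨ C j ω = -1)
    (hIndep : iIndepFun C ℙ)
    (hHead : ∀ j, ℙ {ω | C j ω = 1} = 1/2) (hTail : ∀ j, ℙ {ω | C j ω = -1} = 1/2)
    {I s : Finset ℕ} (hs : s ⊆ I) :
    ℙ (negIndices C I ⁻¹' {s}) = (1/2) ^ #I := by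
  rw [measure_congr (negIndices_ae_eq_cylinder hsign hs),
    hIndep.measure_inter_preimage_eq_mul _ fun _ _ => measurableSet_singleton _]
  refine (prod_congr rfl fun j _ => ?_).trans (prod_const _)
  split_ifs
  exacts [hTail j, hHead j]

theorem measure_negIndices_mem (hMeas : ∀ j, Measurable (C j))
    (hsign : ∀ᵐ ω, ∀ j, C j ω = 1 ∨ C j ω = -1) (hIndep : iIndepFun C ℙ)
    (hHead : ∀ j, ℙ {ω | C j ω = 1} = 1/2) (hTail : ∀ j, ℙ {ω | C j ω = -1} = 1/2)
    {I : Finset ℕ} {G : Finset (Finset ℕ)} (hG : ∀ s ∈ G, s ⊆ I) :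
    ℙ (negIndices C I ⁻¹' G) = #G * (1/2) ^ #I := by
  rw [← sum_measure_preimage_singleton G
      fun s _ => measurable_negIndices hMeas I (measurableSet_singleton s),
    sum_congr rfl fun s hs => measure_negIndices_eq hsign hIndep hHead hTail (hG s hs),
    sum_const, nsmul_eq_mul]

end FairSigns

section NetCapital

variable {Ω : Type*} {C : ℕ → Ω → ℝ} {X : ℕ → Ω → ℝ}

theorem netCapital_one_neg_iff (hX : ∀ k ω, X k ω = 1 - ∏ j ∈ Icc 1 k, (1 - 0.01 * C j ω))
    {ω : Ω} (hω : C 1 ω = 1 ∨ C 1 ω = -1) : X 1 ω < 0 ↔ C 1 ω = -1 := by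
  rcases hω with h | h <;> norm_num [hX, h]

theorem netCapital_two_mul_neg_iff
    (hX : ∀ k ω, X k ω = 1 - ∏ j ∈ Icc 1 k, (1 - 0.01 * C j ω)) {m : ℕ} (hm : m ≤ 199)
    {ω : Ω} (hω : ∀ j, C j ω = 1 ∨ C j ω = -1) :
    X (2 * m) ω < 0 ↔ m < #(negIndices C (Icc 1 (2 * m)) ω) := by
  have hb := card_filter_le (Icc 1 (2 * m)) (C · ω = -1)
  rw [Nat.card_Icc, Nat.add_sub_cancel] at hb
  rw [hX, sub_neg, prod_one_sub_mul_of_sign _ _ fun j _ => hω j, Nat.card_Icc,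
    Nat.add_sub_cancel, show (1 : ℝ) + 0.01 = 1.01 by norm_num,
    show (1 : ℝ) - 0.01 = 0.99 by norm_num]
  exact one_lt_pow_mul_pow_sub_iff hm hb

theorem measurableSet_netCapital_neg [MeasurableSpace Ω] (hMeas : ∀ j, Measurable (C j))
    (hX : ∀ k ω, X k ω = 1 - ∏ j ∈ Icc 1 k, (1 - 0.01 * C j ω)) (k : ℕ) :
    MeasurableSet {ω | X k ω < 0} := by
  simp_rw [hX]
  measurability

variable [MeasureSpace Ω]

theorem netCapital_one_neg_ae_eq (hsign : ∀ᵐ ω, ∀ j, C j ω = 1 ∨ C j ω = -1)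
    (hX : ∀ k ω, X k ω = 1 - ∏ j ∈ Icc 1 k, (1 - 0.01 * C j ω)) :
    {ω | X 1 ω < 0} =ᵐ[ℙ] {ω | C 1 ω = -1} := by
  rw [Filter.eventuallyEq_set]
  filter_upwards [hsign] with ω hω using netCapital_one_neg_iff hX (hω 1)

theorem netCapital_one_and_two_mul_neg_ae_eq (hsign : ∀ᵐ ω, ∀ j, C j ω = 1 ∨ C j ω = -1)
    (hX : ∀ k ω, X k ω = 1 - ∏ j ∈ Icc 1 k, (1 - 0.01 * C j ω)) {m : ℕ} (hm : 1 ≤ m)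
    (hm' : m ≤ 199) :
    ({ω | X 1 ω < 0} ∩ {ω | X (2 * m) ω < 0} : Set Ω) =ᵐ[ℙ]
      negIndices C (Icc 1 (2 * m)) ⁻¹'
        ((Icc 1 (2 * m)).powerset.filter (fun s => 1 ∈ s ∧ m < #s)) := by
  rw [Filter.eventuallyEq_set]
  filter_upwards [hsign] with ω hω
  have h1 : 1 ∈ Icc 1 (2 * m) := mem_Icc.2 ⟨le_rfl, by omega⟩
  simp only [Set.mem_inter_iff, Set.mem_ofPred_eq, netCapital_one_neg_iff hX (hω 1),
    netCapital_two_mul_neg_iff hX hm' hω, Set.mem_preimage, mem_coe, mem_filter, mem_powerset,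
    negIndices, filter_subset, true_and]
  tauto

end NetCapital

/-- For the CPDO net capital driven by i.i.d. fair signs with `δ = 0.01`:
the conditioning event `{X 1 < 0}` has probability `1/2 > 0`, and for every `1 ≤ m ≤ 199`,
`P(X (2m) < 0 | X 1 < 0) = 1/2`. -/
theorem cpdo_even_loss_given_first_loss
    {Ω : Type*} [MeasureSpace Ω] [IsProbabilityMeasure (ℙ : Measure Ω)]
    (δ : ℝ) (hδ : δ = 0.01)
    (C : ℕ → Ω → ℝ)
    (hMeas : ∀ j, Measurable (C j))
    (hIndep : iIndepFun C ℙ)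
    (hHead : ∀ j, ℙ {ω | C j ω = 1} = 1/2)
    (hTail : ∀ j, ℙ {ω | C j ω = -1} = 1/2)
    (X : ℕ → Ω → ℝ)
    (hX : ∀ (k : ℕ) (ω : Ω), X k ω = 1 - ∏ j ∈ Finset.Icc 1 k, (1 - δ * C j ω)) :
    ℙ {ω | X 1 ω < 0} = 1/2 ∧
    ∀ m : ℕ, 1 ≤ m → m ≤ 199 →
      (ℙ[|{ω | X 1 ω < 0}] {ω | X (2 * m) ω < 0}).toReal = 1 / 2 := by
  subst hδ
  have hsign := ae_eq_one_or_neg_one hMeas hHead hTail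
  have hPB : ℙ {ω | X 1 ω < 0} = 1/2 :=
    (measure_congr (netCapital_one_neg_ae_eq hsign hX)).trans (hTail 1)
  refine ⟨hPB, fun m hm hm' => ?_⟩
  rw [cond_apply (measurableSet_netCapital_neg hMeas hX 1), hPB,
    measure_congr (netCapital_one_and_two_mul_neg_ae_eq hsign hX hm hm'),
    measure_negIndices_mem hMeas hsign hIndep hHead hTail fun s hs =>
      mem_powerset.1 (mem_filter.1 hs).1]
  obtain ⟨k, rfl⟩ : ∃ k, m = k + 1 := ⟨m - 1, by omega⟩
  rw [card_powerset_Icc_filter_one_mem_and_lt_card, Nat.card_Icc, Nat.add_sub_cancel, pow_mul,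
    pow_succ]
  simp only [ENNReal.toReal_mul, ENNReal.toReal_inv, ENNReal.toReal_pow, ENNReal.toReal_div,
    ENNReal.toReal_natCast, ENNReal.toReal_one, ENNReal.toReal_ofNat]
  rw [← mul_assoc _ (_ ^ k), Nat.cast_pow, ← mul_pow]
  norm_num
end

section
/- For every integer m with 1 ≤ m ≤ 99, P(X_{2m+1} < 0 | X_{2m} < 0) = 1; that is, conditional on a net loss at toss 2m, a net loss at toss 2m+1 is certain. (The conditioning event has positive probability since P(X_{2m} < 0) ≥ 2^{-2m}.) -/
/-!
Write the factors as `q = 1 - δ = 0.99` (a loss) and `p = 1 + δ = 1.01` (a gain). A product of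
`a` losses and `b` gains with `a + b = 2m` exceeds `1` only if `a < m`, and then `b ≥ a + 2` by
parity. One more loss therefore leaves at least `(q p)^(a+1) p ≥ (q p)^m p`, which still exceeds
`1` as long as `m ≤ 99`. Since the signs are `±1` almost surely, a loss at toss `2m + 1` is
almost sure on the event of a loss at toss `2m`; that event contains the event that the first
`2m` signs are all `-1`, of probability `2^{-2m}`.
-/

open MeasureTheory ProbabilityTheory Finset

lemma exists_prod_eq_pow_mul_pow_of_forall_eq_or_eq {ι M : Type*} [CommMonoid M]
    {s : Finset ι} {c : ι → M} {q p : M} (hc : ∀ j ∈ s, c j = q ∨ c j = p) :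
    ∃ a b, a + b = #s ∧ ∏ j ∈ s, c j = q ^ a * p ^ b := by
  classical
  induction s using Finset.induction_on with
  | empty => exact ⟨0, 0, by simp⟩
  | insert i s hi ih =>
    obtain ⟨a, b, hab, hprod⟩ := ih fun j hj => hc j (mem_insert_of_mem hj)
    rw [prod_insert hi, card_insert_of_notMem hi, hprod]
    rcases hc i (mem_insert_self i s) with h | h
    · exact ⟨a + 1, b, by omega, by rw [h, pow_succ', mul_assoc]⟩
    · exact ⟨a, b + 1, by omega, by rw [h, pow_succ', mul_left_comm]⟩

section LossesAndGains

variable {q p : ℝ} (hq0 : 0 ≤ q) (hq1 : q ≤ 1) (hp : 1 ≤ p) (hqp : q * p ≤ 1)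
include hq0 hq1 hp hqp

lemma mul_pow_mul_le_pow_succ_mul_pow_of_one_lt {a b m : ℕ} (hab : a + b = 2 * m)
    (h : 1 < q ^ a * p ^ b) : (q * p) ^ m * p ≤ q ^ (a + 1) * p ^ b := by
  have hqp0 : 0 ≤ q * p := by positivity
  have ham : a < m := by
    by_contra! hma
    obtain ⟨d, rfl⟩ : ∃ d, a = b + d := ⟨a - b, by omega⟩
    have : q ^ (b + d) * p ^ b ≤ 1 := by
      rw [pow_add, mul_right_comm, ← mul_pow]
      exact mul_le_one₀ (pow_le_one₀ hqp0 hqp) (by positivity) (pow_le_one₀ hq0 hq1)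
    linarith
  obtain ⟨k, rfl⟩ : ∃ k, m = a + 1 + k := ⟨m - a - 1, by omega⟩
  obtain rfl : b = a + 1 + (2 * k + 1) := by omega
  have hgain : (q * p) ^ k * p ≤ p ^ (2 * k + 1) := by
    rw [pow_succ]
    gcongr
    exact (pow_le_one₀ hqp0 hqp).trans (one_le_pow₀ hp)
  calc (q * p) ^ (a + 1 + k) * p = (q * p) ^ (a + 1) * ((q * p) ^ k * p) := by ring
    _ ≤ (q * p) ^ (a + 1) * p ^ (2 * k + 1) := by gcongr
    _ = q ^ (a + 1) * p ^ (a + 1 + (2 * k + 1)) := by ring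

lemma one_lt_mul_prod_of_one_lt_prod {ι : Type*} {s : Finset ι} {c : ι → ℝ} {x : ℝ} {m : ℕ}
    (hs : #s = 2 * m) (hc : ∀ j ∈ s, c j = q ∨ c j = p) (hx : q ≤ x)
    (hm : 1 < (q * p) ^ m * p) (h : 1 < ∏ j ∈ s, c j) : 1 < x * ∏ j ∈ s, c j := by
  obtain ⟨a, b, hab, hprod⟩ := exists_prod_eq_pow_mul_pow_of_forall_eq_or_eq hc
  rw [hprod] at h ⊢
  calc 1 < (q * p) ^ m * p := hm
    _ ≤ q ^ (a + 1) * p ^ b :=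
      mul_pow_mul_le_pow_succ_mul_pow_of_one_lt hq0 hq1 hp hqp (hab.trans hs) h
    _ = q * (q ^ a * p ^ b) := by ring
    _ ≤ x * (q ^ a * p ^ b) := by gcongr

end LossesAndGains

lemma one_lt_prod_Icc_succ_of_one_lt_prod_Icc {m : ℕ} (hm : m ≤ 99) {σ : ℕ → ℝ}
    (hσ : ∀ j, σ j = 1 ∨ σ j = -1) (h : 1 < ∏ j ∈ Icc 1 (2 * m), (1 - 0.01 * σ j)) :
    1 < ∏ j ∈ Icc 1 (2 * m + 1), (1 - 0.01 * σ j) := by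
  have hbound : (1 : ℝ) < (0.99 * 1.01) ^ m * 1.01 :=
    calc (1 : ℝ) < (0.99 * 1.01) ^ 99 * 1.01 := by norm_num
      _ ≤ (0.99 * 1.01) ^ m * 1.01 := by
        gcongr ?_ * _
        exact pow_le_pow_of_le_one (by norm_num) (by norm_num) hm
  have hfactor (j : ℕ) : 1 - 0.01 * σ j = 0.99 ∨ 1 - 0.01 * σ j = 1.01 := by
    rcases hσ j with h | h <;> norm_num [h]
  have hlast : (0.99 : ℝ) ≤ 1 - 0.01 * σ (2 * m + 1) := by
    rcases hσ (2 * m + 1) with h | h <;> norm_num [h]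
  rw [prod_Icc_succ_top (by omega), mul_comm]
  exact one_lt_mul_prod_of_one_lt_prod (by norm_num) (by norm_num) (by norm_num) (by norm_num)
    (Nat.card_Icc _ _) (fun j _ => hfactor j) hlast hbound h

section Probability

variable {Ω : Type*} [MeasurableSpace Ω] {μ : Measure Ω}

lemma ae_eq_or_eq_of_measure_add_eq_one {α : Type*} [MeasurableSpace α]
    [MeasurableSingletonClass α] [IsProbabilityMeasure μ] {f : Ω → α} (hf : Measurable f)
    {a b : α} (hab : a ≠ b) (h : μ {ω | f ω = a} + μ {ω | f ω = b} = 1) :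
    ∀ᵐ ω ∂μ, f ω = a ∨ f ω = b := by
  have ha : MeasurableSet {ω | f ω = a} := hf (measurableSet_singleton a)
  have hb : MeasurableSet {ω | f ω = b} := hf (measurableSet_singleton b)
  have hdisj : Disjoint {ω | f ω = a} {ω | f ω = b} :=
    Set.disjoint_left.2 fun _ hωa hωb => hab (hωa.symm.trans hωb)
  rw [ae_iff, ← Set.compl_ofPred, Set.ofPred_or, prob_compl_eq_zero_iff (ha.union hb),
    measure_union hdisj hb, h]

lemma cond_eq_one_of_ae_le [IsFiniteMeasure μ] {s t : Set Ω} (hs : MeasurableSet s)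
    (hs0 : μ s ≠ 0) (hst : s ≤ᵐ[μ] t) : μ[t | s] = 1 := by
  rw [cond_apply hs, measure_inter_conull' (ae_le_set.1 hst),
    ENNReal.inv_mul_cancel hs0 (measure_ne_top μ s)]

lemma ProbabilityTheory.iIndepFun.measure_biInter_preimage_eq_pow {ι β : Type*}
    [MeasurableSpace β] {f : ι → Ω → β} (hf : iIndepFun f μ) {t : Set β} (ht : MeasurableSet t)
    {r : ENNReal} (hr : ∀ i, μ (f i ⁻¹' t) = r) (s : Finset ι) :
    μ (⋂ i ∈ s, f i ⁻¹' t) = r ^ #s := by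
  rw [hf.measure_inter_preimage_eq_mul s fun _ _ => ht, prod_congr rfl fun i _ => hr i,
    prod_const]

end Probability

/-- For the CPDO net capital driven by i.i.d. fair signs with `δ = 0.01`:
for every `1 ≤ m ≤ 99`, the conditioning event satisfies `P(X (2m) < 0) ≥ 2^{-2m} > 0` and
`P(X (2m+1) < 0 | X (2m) < 0) = 1`: conditional on a net loss at toss `2m`, a net loss at
toss `2m+1` is certain. -/
theorem cpdo_certain_loss_after_even_loss
    {Ω : Type*} [MeasureSpace Ω] [IsProbabilityMeasure (ℙ : Measure Ω)]
    (δ : ℝ) (hδ : δ = 0.01)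
    (C : ℕ → Ω → ℝ)
    (hMeas : ∀ j, Measurable (C j))
    (hIndep : iIndepFun C ℙ)
    (hHead : ∀ j, ℙ {ω | C j ω = 1} = 1/2)
    (hTail : ∀ j, ℙ {ω | C j ω = -1} = 1/2)
    (X : ℕ → Ω → ℝ)
    (hX : ∀ (k : ℕ) (ω : Ω), X k ω = 1 - ∏ j ∈ Finset.Icc 1 k, (1 - δ * C j ω)) :
    ∀ m : ℕ, 1 ≤ m → m ≤ 99 →
      ((2 : ENNReal)⁻¹) ^ (2 * m) ≤ ℙ {ω | X (2 * m) ω < 0} ∧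
      ℙ[|{ω | X (2 * m) ω < 0}] {ω | X (2 * m + 1) ω < 0} = 1 := by
  subst hδ
  intro m hm1 hm99
  have hXmeas : Measurable (X (2 * m)) := by
    rw [show X (2 * m) = _ from funext (hX _)]
    fun_prop
  have hlower : (2⁻¹ : ENNReal) ^ (2 * m) ≤ ℙ {ω | X (2 * m) ω < 0} := by
    calc (2⁻¹ : ENNReal) ^ (2 * m) = ℙ (⋂ j ∈ Icc 1 (2 * m), C j ⁻¹' {-1}) := by
          rw [hIndep.measure_biInter_preimage_eq_pow (measurableSet_singleton _)
            (fun j => (hTail j).trans (one_div 2)), Nat.card_Icc, Nat.add_sub_cancel]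
      _ ≤ ℙ {ω | X (2 * m) ω < 0} := measure_mono fun ω hω => by
          simp only [Set.mem_iInter, Set.mem_preimage, Set.mem_singleton_iff] at hω
          rw [Set.mem_ofPred_eq, hX, prod_congr rfl fun j hj => by rw [hω j hj], prod_const,
            Nat.card_Icc, Nat.add_sub_cancel, sub_neg]
          exact one_lt_pow₀ (by norm_num) (by omega)
  refine ⟨hlower, cond_eq_one_of_ae_le (measurableSet_lt hXmeas measurable_const)
    (ne_of_gt (lt_of_lt_of_le (ENNReal.pow_pos (by simp) _) hlower)) ?_⟩
  have hsign : ∀ᵐ ω, ∀ j, C j ω = 1 ∨ C j ω = -1 := ae_all_iff.2 fun j =>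
    ae_eq_or_eq_of_measure_add_eq_one (hMeas j) (by norm_num)
      (by rw [hHead, hTail, ENNReal.add_halves])
  filter_upwards [hsign] with ω hω (hloss : X (2 * m) ω < 0)
  show X (2 * m + 1) ω < 0
  rw [hX, sub_neg] at hloss ⊢
  exact one_lt_prod_Icc_succ_of_one_lt_prod_Icc hm99 hω hloss
end

section
/- Let c_1 ∈ ℝ and c_2 > -1, and let k, l ≥ 1 be integers with P(X_k < -c_2) > 0. Then P(X_{k+l} ≤ -c_1 | X_k < -c_2) ≥ P(X_l < (c_2 - c_1)/(1 + c_2)). In particular (taking c_2 = 0 and c_1 = 0 or c_1 = γ respectively), P(X_{k+l} < 0 | X_k < 0) ≥ P(X_l < 0) and P(X_{k+l} ≤ -γ | X_k < 0) ≥ P(X_l ≤ -γ). -/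
/-!
Write `1 - X n = ∏_{i < n} G i` with `G i = 1 - δ C_{i+1}`. Then
`1 - X (k + l) = (1 - X k) (1 - X' l)`, where `X' l` is built from `C_{k+1}, …, C_{k+l}` exactly
as `X l` is built from `C_1, …, C_l`: it is independent of `X k`, has the law of `X l`, and
`X' l < 1` almost surely because `|δ| < 1`. Each inequality follows because, on the conditioning
event, `X' l` lying in the set on the left forces `X (k + l)` into the set on the right, so by
independence the conditional probability is at least `P(X' l ∈ ·) = P(X l ∈ ·)`.
-/

open MeasureTheory ProbabilityTheory Finset
open scoped ENNReal

section
variable {Ω α β : Type*} {mΩ : MeasurableSpace Ω} {mα : MeasurableSpace α}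
  {mβ : MeasurableSpace β} {μ : Measure Ω}

lemma ae_eq_or_eq_of_measure_eq_half [IsProbabilityMeasure μ] [MeasurableSingletonClass β]
    {f : Ω → β} (hf : Measurable f) {a b : β} (hab : a ≠ b)
    (ha : μ {ω | f ω = a} = 1 / 2) (hb : μ {ω | f ω = b} = 1 / 2) :
    ∀ᵐ ω ∂μ, f ω = a ∨ f ω = b := by
  have hdisj : Disjoint {ω | f ω = a} {ω | f ω = b} :=
    Set.disjoint_left.2 fun ω h h' => hab (h.symm.trans h')
  have hunion : μ ({ω | f ω = a} ∪ {ω | f ω = b}) = 1 := by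
    rw [measure_union hdisj (hf (measurableSet_singleton b)), ha, hb, ENNReal.add_halves]
  exact (ae_iff_measure_eq (by measurability)).2 (hunion.trans measure_univ.symm)

lemma map_eq_of_measure_eq_half [IsProbabilityMeasure μ] [MeasurableSingletonClass β]
    {f : Ω → β} (hf : Measurable f) {a b : β} (hab : a ≠ b)
    (ha : μ {ω | f ω = a} = 1 / 2) (hb : μ {ω | f ω = b} = 1 / 2) :
    μ.map f = (1 / 2 : ℝ≥0∞) • (Measure.dirac a + Measure.dirac b) := by
  have hsupp : ∀ᵐ x ∂μ.map f, x ∈ ({a} ∪ {b} : Set β) :=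
    (ae_map_iff hf.aemeasurable (by measurability)).2
      (ae_eq_or_eq_of_measure_eq_half hf hab ha hb)
  rw [← Measure.restrict_eq_self_of_ae_mem hsupp,
    Measure.restrict_union (by simpa using hab) (measurableSet_singleton b),
    Measure.restrict_singleton, Measure.restrict_singleton,
    Measure.map_apply hf (measurableSet_singleton a),
    Measure.map_apply hf (measurableSet_singleton b)]
  simp only [Set.preimage, Set.mem_singleton_iff, ha, hb, smul_add]

lemma measure_preimage_le_cond_of_indepFun [IsFiniteMeasure μ] {Y : Ω → α} {Z : Ω → β}
    (hYZ : IndepFun Y Z μ) (hY : Measurable Y) {s : Set α} {t : Set β} (hs : MeasurableSet s)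
    (ht : MeasurableSet t) (hμs : μ (Y ⁻¹' s) ≠ 0) {E : Set Ω}
    (hE : ∀ᵐ ω ∂μ, Y ω ∈ s → Z ω ∈ t → ω ∈ E) :
    μ (Z ⁻¹' t) ≤ μ[|Y ⁻¹' s] E := by
  have hsub : (Y ⁻¹' s ∩ Z ⁻¹' t : Set Ω) ≤ᵐ[μ] (Y ⁻¹' s ∩ E : Set Ω) := by
    filter_upwards [hE] with ω hω using fun ⟨hY, hZ⟩ => ⟨hY, hω hY hZ⟩
  calc μ (Z ⁻¹' t) = (μ (Y ⁻¹' s))⁻¹ * (μ (Y ⁻¹' s) * μ (Z ⁻¹' t)) :=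
        (ENNReal.inv_mul_cancel_left hμs (measure_ne_top _ _)).symm
    _ = (μ (Y ⁻¹' s))⁻¹ * μ (Y ⁻¹' s ∩ Z ⁻¹' t) := by
        rw [hYZ.measure_inter_preimage_eq_mul _ _ hs ht]
    _ ≤ μ[|Y ⁻¹' s] E := by
        rw [cond_apply (hY hs)]
        exact mul_le_mul_right (measure_mono_ae hsub) _

namespace ProbabilityTheory

lemma iIndepFun.measure_biInter_preimage_ne_zero {ι : Type*} {f : ι → Ω → β}
    (hf : iIndepFun f μ) {s : Set β} (hs : MeasurableSet s) (hμ : ∀ i, μ (f i ⁻¹' s) ≠ 0)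
    (S : Finset ι) :
    μ (⋂ i ∈ S, f i ⁻¹' s) ≠ 0 := by
  rw [hf.measure_inter_preimage_eq_mul S fun _ _ => hs]
  exact Finset.prod_ne_zero_iff.2 fun i _ => hμ i

lemma iIndepFun.indepFun_finsetProd_finsetProd [CommMonoid β] [MeasurableMul₂ β]
    {ι : Type*} {f : ι → Ω → β} (hf : iIndepFun f μ) (hmeas : ∀ i, Measurable (f i))
    {S T : Finset ι} (hST : Disjoint S T) : IndepFun (∏ i ∈ S, f i) (∏ i ∈ T, f i) μ := by
  have hprod (U : Finset ι) : Measurable fun v : U → β => ∏ i, v i :=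
    Finset.measurable_prod _ fun i _ => measurable_pi_apply i
  convert (hf.indepFun_finset S T hST hmeas).comp (hprod S) (hprod T) using 1 <;>
    ext ω <;> simp only [Finset.prod_apply, Function.comp_apply] <;>
    exact (Finset.prod_coe_sort _ _).symm

lemma iIndepFun.identDistrib_prod_range_add [CommMonoid β] [MeasurableMul₂ β]
    {f : ℕ → Ω → β} (hf : iIndepFun f μ) (hident : ∀ i j, IdentDistrib (f i) (f j) μ μ)
    (k n : ℕ) : IdentDistrib (∏ i ∈ range n, f (k + i)) (∏ i ∈ range n, f i) μ μ := by
  have hvec : IdentDistrib (fun ω (i : Fin n) => f (k + i) ω) (fun ω (i : Fin n) => f i ω) μ μ :=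
    IdentDistrib.pi (fun i => hident _ _) (hf.precomp fun i j h => Fin.ext (by simpa using h))
      (hf.precomp Fin.val_injective)
  have hprod : Measurable fun v : Fin n → β => ∏ i, v i :=
    Finset.measurable_prod _ fun i _ => measurable_pi_apply i
  convert hvec.comp hprod using 1 <;> ext ω <;>
    simp [Finset.prod_apply, Fin.prod_univ_eq_prod_range (fun i => f (k + i) ω),
      Fin.prod_univ_eq_prod_range (fun i => f i ω)]

end ProbabilityTheory

theorem measure_le_cond_one_sub_prod_range [IsFiniteMeasure μ] {G : ℕ → Ω → ℝ}
    (hG : iIndepFun G μ) (hmeas : ∀ i, Measurable (G i))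
    (hident : ∀ i j, IdentDistrib (G i) (G j) μ μ) (hpos : ∀ i, ∀ᵐ ω ∂μ, 0 < G i ω)
    {W : ℕ → Ω → ℝ} (hW : ∀ n ω, W n ω = 1 - ∏ i ∈ range n, G i ω) (k l : ℕ)
    {A B T : Set ℝ} (hA : MeasurableSet A) (hB : MeasurableSet B) (hμA : μ (W k ⁻¹' A) ≠ 0)
    (hmul : ∀ x ∈ A, ∀ y ∈ B, y < 1 → 1 - (1 - x) * (1 - y) ∈ T) :
    μ (W l ⁻¹' B) ≤ μ[|W k ⁻¹' A] (W (k + l) ⁻¹' T) := by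
  have hW' : W = fun n => (fun x => 1 - x) ∘ ∏ i ∈ range n, G i := by
    ext n ω; simp [hW, Finset.prod_apply]
  set Z : Ω → ℝ := (fun x => 1 - x) ∘ ∏ i ∈ range l, G (k + i)
  have hsplit : ∀ ω, W (k + l) ω = 1 - (1 - W k ω) * (1 - Z ω) := by
    intro ω; simp [hW, Z, Finset.prod_range_add, Finset.prod_apply]
  have hZW : IdentDistrib Z (W l) μ μ := by
    rw [hW']; exact (hG.identDistrib_prod_range_add hident k l).comp (by fun_prop)
  have hindep : IndepFun (W k) Z μ := by
    have h := hG.indepFun_finsetProd_finsetProd hmeas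
      (Finset.range_eq_Ico k ▸ Finset.Ico_disjoint_Ico_consecutive 0 k (k + l))
    rw [Finset.prod_Ico_eq_prod_range, Nat.add_sub_cancel_left] at h
    rw [hW']; exact h.comp (by fun_prop) (by fun_prop)
  have hZ : ∀ᵐ ω ∂μ, Z ω < 1 := by
    filter_upwards [ae_all_iff.2 hpos] with ω hω
    simpa [Z, Finset.prod_apply] using Finset.prod_pos fun i _ => hω (k + i)
  rw [← hZW.measure_mem_eq hB]
  refine measure_preimage_le_cond_of_indepFun hindep ?_ hA hB hμA ?_
  · rw [show W k = _ from funext (hW k)]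
    exact measurable_const.sub (Finset.measurable_prod _ fun i _ => hmeas i)
  · filter_upwards [hZ] with ω hω hY hZB
    simpa [hsplit] using hmul _ hY _ hZB hω

end

section
variable {Ω : Type*} {mΩ : MeasurableSpace Ω} {μ : Measure Ω} {C : ℕ → Ω → ℝ} {δ : ℝ}
  {X : ℕ → Ω → ℝ}

lemma capital_eq_one_sub_prod_range
    (hX : ∀ k ω, X k ω = 1 - ∏ j ∈ Icc 1 k, (1 - δ * C j ω)) (n : ℕ) (ω : Ω) :
    X n ω = 1 - ∏ i ∈ range n, (1 - δ * C (i + 1) ω) := by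
  rw [hX, Finset.range_eq_Ico, Finset.prod_Ico_add' (fun j => 1 - δ * C j ω)]
  rfl

lemma measure_capital_neg_ne_zero (hIndep : iIndepFun C μ)
    (hTail : ∀ j, μ {ω | C j ω = -1} = 1 / 2) (hδ : 0 < δ)
    (hX : ∀ k ω, X k ω = 1 - ∏ j ∈ Icc 1 k, (1 - δ * C j ω)) {k : ℕ} (hk : k ≠ 0) :
    μ {ω | X k ω < 0} ≠ 0 := by
  have hsub : ⋂ i ∈ range k, C (i + 1) ⁻¹' {-1} ⊆ {ω | X k ω < 0} := by
    intro ω hω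
    simp only [Set.mem_iInter, Set.mem_preimage, Set.mem_singleton_iff, mem_range] at hω
    have hgrowth : 1 < (1 + δ) ^ k := one_lt_pow₀ (by linarith) hk
    show X k ω < 0
    rw [capital_eq_one_sub_prod_range hX, Finset.prod_congr rfl fun i hi =>
      show 1 - δ * C (i + 1) ω = 1 + δ by rw [hω i (mem_range.1 hi)]; ring, prod_const, card_range]
    linarith
  refine fun h => (hIndep.precomp (add_left_injective 1)).measure_biInter_preimage_ne_zero
    (measurableSet_singleton _) (fun i => (hTail (i + 1)).trans_ne (by norm_num)) (range k)
    (measure_mono_null hsub h)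

theorem measure_le_cond_capital [IsProbabilityMeasure μ] (hMeas : ∀ j, Measurable (C j))
    (hIndep : iIndepFun C μ) (hHead : ∀ j, μ {ω | C j ω = 1} = 1 / 2)
    (hTail : ∀ j, μ {ω | C j ω = -1} = 1 / 2) (hδ : |δ| < 1)
    (hX : ∀ k ω, X k ω = 1 - ∏ j ∈ Icc 1 k, (1 - δ * C j ω)) (k l : ℕ)
    {A B T : Set ℝ} (hA : MeasurableSet A) (hB : MeasurableSet B) (hμA : μ (X k ⁻¹' A) ≠ 0)
    (hmul : ∀ x ∈ A, ∀ y ∈ B, y < 1 → 1 - (1 - x) * (1 - y) ∈ T) :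
    μ (X l ⁻¹' B) ≤ μ[|X k ⁻¹' A] (X (k + l) ⁻¹' T) := by
  have hlaw : ∀ i j, IdentDistrib (C i) (C j) μ μ := fun i j =>
    ⟨(hMeas i).aemeasurable, (hMeas j).aemeasurable, by
      rw [map_eq_of_measure_eq_half (hMeas i) (by norm_num) (hHead i) (hTail i),
        map_eq_of_measure_eq_half (hMeas j) (by norm_num) (hHead j) (hTail j)]⟩
  have hpos : ∀ i, ∀ᵐ ω ∂μ, 0 < 1 - δ * C (i + 1) ω := fun i => by
    filter_upwards [ae_eq_or_eq_of_measure_eq_half (hMeas (i + 1)) (by norm_num)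
      (hHead (i + 1)) (hTail (i + 1))] with ω hω
    rcases hω with hω | hω <;> rw [hω] <;> linarith [abs_lt.1 hδ]
  exact measure_le_cond_one_sub_prod_range (G := fun i ω => 1 - δ * C (i + 1) ω)
    ((hIndep.precomp (add_left_injective 1)).comp (fun _ x => 1 - δ * x) fun _ => by fun_prop)
    (fun i => by fun_prop) (fun i j => (hlaw _ _).comp (u := fun x => 1 - δ * x) (by fun_prop))
    hpos (capital_eq_one_sub_prod_range hX) k l hA hB hμA hmul

end

theorem cpdo_memory_inequalities_general
    {Ω : Type*} [MeasureSpace Ω] [IsProbabilityMeasure (ℙ : Measure Ω)]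
    (δ γ : ℝ) (hδ : δ = 0.01)
    (C : ℕ → Ω → ℝ)
    (hMeas : ∀ j, Measurable (C j))
    (hIndep : iIndepFun C ℙ)
    (hHead : ∀ j, ℙ {ω | C j ω = 1} = 1/2)
    (hTail : ∀ j, ℙ {ω | C j ω = -1} = 1/2)
    (X : ℕ → Ω → ℝ)
    (hX : ∀ (k : ℕ) (ω : Ω), X k ω = 1 - ∏ j ∈ Finset.Icc 1 k, (1 - δ * C j ω))
    (c₁ c₂ : ℝ) (hc₂ : -1 < c₂) (k l : ℕ) (hk : 1 ≤ k)
    (hpos : 0 < ℙ {ω | X k ω < -c₂}) :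
    ℙ {ω | X l ω < (c₂ - c₁) / (1 + c₂)}
        ≤ ℙ[|{ω | X k ω < -c₂}] {ω | X (k + l) ω ≤ -c₁} ∧
    ℙ {ω | X l ω < 0} ≤ ℙ[|{ω | X k ω < 0}] {ω | X (k + l) ω < 0} ∧
    ℙ {ω | X l ω ≤ -γ} ≤ ℙ[|{ω | X k ω < 0}] {ω | X (k + l) ω ≤ -γ} := by
  have hδ₁ : |δ| < 1 := by norm_num [hδ, abs_lt]
  have hneg : ℙ {ω | X k ω < 0} ≠ 0 :=
    measure_capital_neg_ne_zero hIndep hTail (by norm_num [hδ]) hX (by omega)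
  refine ⟨?_, ?_, ?_⟩
  · refine measure_le_cond_capital hMeas hIndep hHead hTail hδ₁ hX k l (A := Set.Iio (-c₂))
      (B := Set.Iio ((c₂ - c₁) / (1 + c₂))) (T := Set.Iic (-c₁))
      measurableSet_Iio measurableSet_Iio hpos.ne' fun x hx y hy hy₁ => ?_
    simp only [Set.mem_Iio, Set.mem_Iic] at hx hy ⊢
    rw [lt_div_iff₀ (by linarith)] at hy
    nlinarith [mul_lt_mul_of_pos_right (show 1 + c₂ < 1 - x by linarith) (sub_pos.2 hy₁)]
  · refine measure_le_cond_capital hMeas hIndep hHead hTail hδ₁ hX k l (A := Set.Iio 0)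
      (B := Set.Iio 0) (T := Set.Iio 0) measurableSet_Iio measurableSet_Iio hneg
      fun x hx y hy _ => ?_
    simp only [Set.mem_Iio] at hx hy ⊢
    nlinarith
  · refine measure_le_cond_capital hMeas hIndep hHead hTail hδ₁ hX k l (A := Set.Iio 0)
      (B := Set.Iic (-γ)) (T := Set.Iic (-γ)) measurableSet_Iio measurableSet_Iic hneg
      fun x hx y hy hy₁ => ?_
    simp only [Set.mem_Iio, Set.mem_Iic] at hx hy ⊢
    nlinarith [mul_pos (neg_pos.2 hx) (sub_pos.2 hy₁)]

/-- For the CPDO net capital driven by i.i.d. fair signs with `δ = 0.01`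
and `γ = 0.1`: if `c₁ ∈ ℝ`, `c₂ > -1`, `k, l ≥ 1` and `P(X k < -c₂) > 0`, then
`P(X (k+l) ≤ -c₁ | X k < -c₂) ≥ P(X l < (c₂ - c₁)/(1 + c₂))`; in particular
`P(X (k+l) < 0 | X k < 0) ≥ P(X l < 0)` and `P(X (k+l) ≤ -γ | X k < 0) ≥ P(X l ≤ -γ)`. -/
theorem cpdo_memory_inequalities
    {Ω : Type*} [MeasureSpace Ω] [IsProbabilityMeasure (ℙ : Measure Ω)]
    (δ γ : ℝ) (hδ : δ = 0.01) (hγ : γ = 0.1)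
    (C : ℕ → Ω → ℝ)
    (hMeas : ∀ j, Measurable (C j))
    (hIndep : iIndepFun C ℙ)
    (hHead : ∀ j, ℙ {ω | C j ω = 1} = 1/2)
    (hTail : ∀ j, ℙ {ω | C j ω = -1} = 1/2)
    (X : ℕ → Ω → ℝ)
    (hX : ∀ (k : ℕ) (ω : Ω), X k ω = 1 - ∏ j ∈ Finset.Icc 1 k, (1 - δ * C j ω))
    (c₁ c₂ : ℝ) (hc₂ : -1 < c₂) (k l : ℕ) (hk : 1 ≤ k) (hl : 1 ≤ l)
    (hpos : 0 < ℙ {ω | X k ω < -c₂}) :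
    ℙ {ω | X l ω < (c₂ - c₁) / (1 + c₂)}
        ≤ ℙ[|{ω | X k ω < -c₂}] {ω | X (k + l) ω ≤ -c₁} ∧
    ℙ {ω | X l ω < 0} ≤ ℙ[|{ω | X k ω < 0}] {ω | X (k + l) ω < 0} ∧
    ℙ {ω | X l ω ≤ -γ} ≤ ℙ[|{ω | X k ω < 0}] {ω | X (k + l) ω ≤ -γ} :=
  cpdo_memory_inequalities_general δ γ hδ C hMeas hIndep hHead hTail X hX c₁ c₂ hc₂ k l hk hpos
end

section
/- Let τ be the first toss k ≥ 1 at which X_k ≤ -γ or X_k ≥ 1-γ (the termination time of the CPDO game under the Cash-Out rule and the modified Cash-In rule). Then τ is almost surely finite, and the probability that the game ends in Cash-In satisfies P(X_τ ≥ 1-γ) ≤ γ + δ + γδ = 0.111; equivalently, the probability of Cash-Out is at least 0.889. -/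
/-!
Write `M k = 1 - X k = ∏_{j ≤ k} (1 - δ C_j)`. Since the factors are independent with mean `1`,
`M` is a nonnegative martingale with `M 0 = 1`, and the game stops as soon as `M` leaves
`(γ, 1 + γ)`. Until then `M < 1 + γ`, and one toss multiplies it by at most `1 + δ`, so `M` stopped
at the exit time (capped at `n`) is bounded by `B = (1 + γ)(1 + δ)` and, by optional stopping, has
mean `1`. Markov's inequality for `B - M` bounds the probability of leaving through the bottom
(Cash-In) by `(B - 1) / (B - γ) ≤ B - 1 = γ + δ + γδ`. The game ends almost surely because, by the
second Borel–Cantelli lemma, some block of `L` consecutive tosses is all `+1`, and `L` factors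
`1 - δ` push any capital below `1 + γ` under `γ`.
-/

open MeasureTheory ProbabilityTheory Filter

section PartialProd

variable {Ω : Type*}

def partialProd (ξ : ℕ → Ω → ℝ) (k : ℕ) (ω : Ω) : ℝ := ∏ j ∈ Finset.Icc 1 k, ξ j ω

variable {ξ : ℕ → Ω → ℝ} {ω : Ω}

@[simp]
lemma partialProd_zero : partialProd ξ 0 ω = 1 := by simp [partialProd]

lemma partialProd_succ (k : ℕ) : partialProd ξ (k + 1) ω = partialProd ξ k ω * ξ (k + 1) ω :=
  Finset.prod_Icc_succ_top (Nat.le_add_left 1 k) _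

lemma partialProd_eq_prod (k : ℕ) : partialProd ξ k = ∏ j ∈ Finset.Icc 1 k, ξ j := by
  ext; simp [partialProd]

lemma partialProd_succ_eq_mul (k : ℕ) : partialProd ξ (k + 1) = partialProd ξ k * ξ (k + 1) := by
  ext; exact partialProd_succ k

lemma partialProd_add_of_eq_const {m L : ℕ} {r : ℝ} (h : ∀ j ∈ Finset.Ioc m (m + L), ξ j ω = r) :
    partialProd ξ (m + L) ω = partialProd ξ m ω * r ^ L := by
  induction L with
  | zero => simp
  | succ L ih =>
    rw [← add_assoc, partialProd_succ, ih fun j hj => h j (Finset.Ioc_subset_Ioc_right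
      (by omega) hj), h _ (by simp), pow_succ, mul_assoc]

lemma partialProd_succ_le {c : ℝ} (h0 : ∀ j, 0 ≤ ξ j ω) (hc : ∀ j, ξ j ω ≤ c) (k : ℕ) :
    partialProd ξ (k + 1) ω ≤ c * partialProd ξ k ω := by
  rw [partialProd_succ, mul_comm]
  exact mul_le_mul_of_nonneg_right (hc _) (Finset.prod_nonneg fun j _ => h0 j)

lemma exists_partialProd_notMem_Ioo {a b r : ℝ} {m L : ℕ} (hb : 1 ≤ b) (hr : 0 ≤ r)
    (hL : 1 ≤ L) (hbr : b * r ^ L ≤ a) (hblock : ∀ j ∈ Finset.Ioc m (m + L), ξ j ω = r) :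
    ∃ k, 1 ≤ k ∧ partialProd ξ k ω ∉ Set.Ioo a b := by
  by_cases hm : 1 ≤ m ∧ partialProd ξ m ω ∉ Set.Ioo a b
  · exact ⟨m, hm⟩
  refine ⟨m + L, by omega, fun hmem => ?_⟩
  have hle : partialProd ξ m ω ≤ b := by
    rcases Nat.eq_zero_or_pos m with rfl | hpos
    · simpa using hb
    · exact (not_not.1 fun h => hm ⟨hpos, h⟩).2.le
  rw [partialProd_add_of_eq_const hblock] at hmem
  have := mul_le_mul_of_nonneg_right hle (pow_nonneg hr L)
  linarith [hmem.1]

end PartialProd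

section

variable {Ω : Type*} {m0 : MeasurableSpace Ω} {μ : Measure Ω}

section FairSign

variable [IsProbabilityMeasure μ] {C : Ω → ℝ}

lemma ae_eq_one_or_eq_neg_one_of_fair (hC : Measurable C) (h1 : μ {ω | C ω = 1} = 1 / 2)
    (h2 : μ {ω | C ω = -1} = 1 / 2) : ∀ᵐ ω ∂μ, C ω = 1 ∨ C ω = -1 := by
  have hdisj : Disjoint {ω | C ω = 1} {ω | C ω = -1} :=
    Set.disjoint_left.2 fun ω (h : C ω = 1) (h' : C ω = -1) => by norm_num [h] at h'
  have hunion : μ ({ω | C ω = 1} ∪ {ω | C ω = -1}) = 1 := by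
    rw [measure_union hdisj (hC (measurableSet_singleton _)), h1, h2, ENNReal.add_halves]
  exact (mem_ae_iff_prob_eq_one
    ((hC (measurableSet_singleton _)).union (hC (measurableSet_singleton _)))).2 hunion

lemma integrable_of_fair (hC : Measurable C) (h1 : μ {ω | C ω = 1} = 1 / 2)
    (h2 : μ {ω | C ω = -1} = 1 / 2) : Integrable C μ :=
  .of_bound hC.aestronglyMeasurable 1 <| by
    filter_upwards [ae_eq_one_or_eq_neg_one_of_fair hC h1 h2] with ω hω
    rcases hω with h | h <;> simp [h]

lemma integral_eq_zero_of_fair (hC : Measurable C) (h1 : μ {ω | C ω = 1} = 1 / 2)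
    (h2 : μ {ω | C ω = -1} = 1 / 2) : μ[C] = 0 := by
  have hs : MeasurableSet {ω | C ω = 1} := hC (measurableSet_singleton _)
  have hC_eq : C =ᵐ[μ] fun ω => 2 * {ω | C ω = 1}.indicator 1 ω - 1 := by
    filter_upwards [ae_eq_one_or_eq_neg_one_of_fair hC h1 h2] with ω hω
    rcases hω with h | h <;> simp [Set.indicator, h] <;> norm_num
  rw [integral_congr_ae hC_eq, integral_sub ((integrable_indicator_iff hs).2
    (integrable_const 1).integrableOn |>.const_mul 2) (integrable_const 1),
    integral_const_mul, integral_indicator_one hs, measureReal_def, h1]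
  norm_num

end FairSign

section ProductMartingale

variable {ξ : ℕ → Ω → ℝ}

lemma stronglyMeasurable_partialProd_natural (hsm : ∀ j, StronglyMeasurable (ξ j)) (k : ℕ) :
    StronglyMeasurable[Filtration.natural ξ hsm k] (partialProd ξ k) := by
  rw [partialProd_eq_prod]
  exact Finset.stronglyMeasurable_prod _ fun j hj =>
    (Filtration.stronglyAdapted_natural hsm j).mono (Filtration.mono _ (Finset.mem_Icc.1 hj).2)

lemma ProbabilityTheory.iIndepFun.integrable_partialProd (hsm : ∀ j, StronglyMeasurable (ξ j))
    (hind : iIndepFun ξ μ) (hint : ∀ j, Integrable (ξ j) μ) (k : ℕ) :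
    Integrable (partialProd ξ k) μ := by
  induction k with
  | zero =>
    have := hind.isProbabilityMeasure
    rw [partialProd_eq_prod, Finset.Icc_eq_empty (by omega), Finset.prod_empty]
    exact integrable_const (1 : ℝ)
  | succ k ih =>
    rw [partialProd_succ_eq_mul, partialProd_eq_prod] at *
    exact (hind.indepFun_finsetProd_of_notMem (fun j => (hsm j).measurable)
      (by simp)).integrable_mul ih (hint _)

theorem ProbabilityTheory.iIndepFun.martingale_partialProd
    (hsm : ∀ j, StronglyMeasurable (ξ j)) (hind : iIndepFun ξ μ) (hint : ∀ j, Integrable (ξ j) μ)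
    (hmean : ∀ j, μ[ξ j] = 1) : Martingale (partialProd ξ) (Filtration.natural ξ hsm) μ := by
  have := hind.isProbabilityMeasure
  refine martingale_nat (stronglyMeasurable_partialProd_natural hsm)
    (hind.integrable_partialProd hsm hint) fun n => ?_
  have hpull := condExp_mul_of_stronglyMeasurable_left (m := Filtration.natural ξ hsm n) (μ := μ)
    (stronglyMeasurable_partialProd_natural hsm n)
    (partialProd_succ_eq_mul n ▸ hind.integrable_partialProd hsm hint (n + 1)) (hint (n + 1))
  rw [partialProd_succ_eq_mul]
  filter_upwards [hpull, hind.condExp_natural_ae_eq_of_lt hsm (Nat.lt_succ_self n)] with ω h h'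
  simp [h, h', hmean]

end ProductMartingale

section Stopping

lemma hittingBtwn_eq_sInf_of_mem {β : Type*} {u : ℕ → Ω → β} {s : Set β} {m n k : ℕ} {ω : Ω}
    (hmk : m ≤ k) (hkn : k ≤ n) (hk : u k ω ∈ s) :
    hittingBtwn u s m n ω = sInf {i | m ≤ i ∧ u i ω ∈ s} := by
  have hex : ∃ j ∈ Set.Icc m n, u j ω ∈ s := ⟨k, ⟨hmk, hkn⟩, hk⟩
  obtain ⟨hm, hmem⟩ := Nat.sInf_mem (⟨k, hmk, hk⟩ : {i | m ≤ i ∧ u i ω ∈ s}.Nonempty)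
  refine le_antisymm (hittingBtwn_le_of_mem hm ?_ hmem) ?_
  · exact (Nat.sInf_le (show k ∈ {i | m ≤ i ∧ u i ω ∈ s} from ⟨hmk, hk⟩)).trans hkn
  · exact Nat.sInf_le (show _ ∈ {i | m ≤ i ∧ u i ω ∈ s} from
      ⟨le_hittingBtwn (hmk.trans hkn) ω, hittingBtwn_mem_set hex⟩)

lemma stoppedValue_hittingBtwn_le {u : ℕ → Ω → ℝ} {a b c : ℝ} {n : ℕ} {ω : Ω}
    (h0 : u 0 ω < b) (hc : 0 ≤ c) (hstep : ∀ k, u (k + 1) ω ≤ c * u k ω) :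
    stoppedValue u (fun ω => ((hittingBtwn u (Set.Ioo a b)ᶜ 1 n ω : ℕ) : WithTop ℕ)) ω ≤
      max b (c * b) := by
  change u (hittingBtwn u (Set.Ioo a b)ᶜ 1 n ω) ω ≤ _
  set h := hittingBtwn u (Set.Ioo a b)ᶜ 1 n ω
  rcases Nat.eq_zero_or_eq_succ_pred h with h_eq | h_eq
  · rw [h_eq]; exact h0.le.trans (le_max_left _ _)
  have hprev : u (h - 1) ω < b := by
    rcases Nat.eq_zero_or_pos (h - 1) with h1 | h1
    · rwa [h1]
    · have := notMem_of_lt_hittingBtwn (show h - 1 < h by omega) h1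
      simp only [Set.mem_compl_iff, not_not] at this
      exact this.2
  rw [h_eq]
  calc u (h - 1 + 1) ω ≤ c * u (h - 1) ω := hstep _
    _ ≤ c * b := mul_le_mul_of_nonneg_left hprev.le hc
    _ ≤ max b (c * b) := le_max_right _ _

theorem MeasureTheory.Martingale.integral_stoppedValue_eq [IsFiniteMeasure μ]
    {𝒢 : Filtration ℕ m0} {f : ℕ → Ω → ℝ} (hf : Martingale f 𝒢 μ) {τ : Ω → WithTop ℕ}
    (hτ : IsStoppingTime 𝒢 τ) {N : ℕ} (hbdd : ∀ ω, τ ω ≤ N) :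
    μ[stoppedValue f τ] = μ[f 0] := by
  have h0 : IsStoppingTime 𝒢 (fun _ => ((0 : ℕ) : WithTop ℕ)) := isStoppingTime_const 𝒢 0
  have hle : (fun _ => ((0 : ℕ) : WithTop ℕ)) ≤ τ := fun _ => bot_le
  have hup := hf.submartingale.expected_stoppedValue_mono h0 hτ hle hbdd
  have hdown := hf.neg.submartingale.expected_stoppedValue_mono h0 hτ hle hbdd
  change μ[f 0] ≤ μ[stoppedValue f τ] at hup
  change μ[fun ω => -f 0 ω] ≤ μ[fun ω => -stoppedValue f τ ω] at hdown
  rw [integral_neg, integral_neg] at hdown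
  linarith

lemma measureReal_setOf_le_le_of_ae_le [IsProbabilityMeasure μ] {Y : Ω → ℝ}
    (hY : Integrable Y μ) {a B : ℝ} (hB : ∀ᵐ ω ∂μ, Y ω ≤ B) (haB : a < B) :
    μ.real {ω | Y ω ≤ a} ≤ (B - μ[Y]) / (B - a) := by
  have hmarkov := mul_meas_ge_le_integral_of_nonneg (μ := μ) (f := fun ω => B - Y ω)
    (by filter_upwards [hB] with ω hω; simp [hω]) ((integrable_const B).sub hY) (B - a)
  have hset : {ω | B - a ≤ B - Y ω} = {ω | Y ω ≤ a} := by ext; simp only [sub_le_sub_iff_left]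
  rw [hset, integral_sub (integrable_const B) hY, integral_const, probReal_univ, smul_eq_mul,
    one_mul] at hmarkov
  rw [le_div_iff₀ (sub_pos.2 haB)]
  linarith

theorem MeasureTheory.Martingale.measureReal_stoppedValue_hittingBtwn_le
    [IsProbabilityMeasure μ] {ℱ : Filtration ℕ m0} {M : ℕ → Ω → ℝ} (hM : Martingale M ℱ μ)
    (h0 : ∀ ω, M 0 ω = 1) {a b c : ℝ} (ha : a < 1) (hb : 1 < b) (hc : 0 ≤ c)
    (hstep : ∀ᵐ ω ∂μ, ∀ k, M (k + 1) ω ≤ c * M k ω) (n : ℕ) :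
    μ.real {ω | stoppedValue M (fun ω => ((hittingBtwn M (Set.Ioo a b)ᶜ 1 n ω : ℕ) :
        WithTop ℕ)) ω ≤ a} ≤ (max b (c * b) - 1) / (max b (c * b) - a) := by
  have hstop : IsStoppingTime ℱ (fun ω => ((hittingBtwn M (Set.Ioo a b)ᶜ 1 n ω : ℕ) :
      WithTop ℕ)) := hM.stronglyAdapted.adapted.isStoppingTime_hittingBtwn measurableSet_Ioo.compl
  have hstop_le : ∀ ω, ((hittingBtwn M (Set.Ioo a b)ᶜ 1 n ω : ℕ) : WithTop ℕ) ≤ n :=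
    fun ω => WithTop.coe_le_coe.2 (hittingBtwn_le ω)
  have hmean : μ[stoppedValue M (fun ω => ((hittingBtwn M (Set.Ioo a b)ᶜ 1 n ω : ℕ) :
      WithTop ℕ))] = 1 := by
    rw [hM.integral_stoppedValue_eq hstop hstop_le]
    simp [h0]
  rw [← hmean]
  refine measureReal_setOf_le_le_of_ae_le (integrable_stoppedValue ℕ hstop hM.integrable hstop_le)
    ?_ (by linarith [le_max_left b (c * b)])
  filter_upwards [hstep] with ω hω
  exact stoppedValue_hittingBtwn_le (by rw [h0]; exact hb) hc hω

theorem MeasureTheory.Martingale.measureReal_exit_below_le [IsProbabilityMeasure μ]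
    {ℱ : Filtration ℕ m0} {M : ℕ → Ω → ℝ} (hM : Martingale M ℱ μ) (h0 : ∀ ω, M 0 ω = 1)
    {a b c : ℝ} (ha : a < 1) (hb : 1 < b) (hc : 0 ≤ c)
    (hstep : ∀ᵐ ω ∂μ, ∀ k, M (k + 1) ω ≤ c * M k ω) :
    μ.real {ω | M (sInf {k | 1 ≤ k ∧ M k ω ∉ Set.Ioo a b}) ω ≤ a} ≤
      (max b (c * b) - 1) / (max b (c * b) - a) := by
  set T : Ω → ℕ := fun ω => sInf {k | 1 ≤ k ∧ M k ω ∉ Set.Ioo a b}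
  have hA_sub : ∀ n : ℕ, {ω | T ω ≤ n ∧ M (T ω) ω ≤ a} ⊆ {ω | stoppedValue M
      (fun ω => ((hittingBtwn M (Set.Ioo a b)ᶜ 1 n ω : ℕ) : WithTop ℕ)) ω ≤ a} := by
    rintro n ω ⟨hTn, hMT⟩
    -- `sInf ∅ = 0`, and `M 0 = 1 > a`: the games that never end are not counted here.
    have hT1 : 1 ≤ T ω := Nat.one_le_iff_ne_zero.2 fun hT0 => by
      rw [hT0, h0] at hMT; linarith
    have hhit := hittingBtwn_eq_sInf_of_mem hT1 hTn (u := M) (s := (Set.Ioo a b)ᶜ)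
      (fun h => (not_lt.2 hMT) h.1)
    change M (hittingBtwn M (Set.Ioo a b)ᶜ 1 n ω) ω ≤ a
    rwa [hhit]
  have hunion : {ω | M (T ω) ω ≤ a} = ⋃ n, {ω | T ω ≤ n ∧ M (T ω) ω ≤ a} := by
    ext ω
    exact ⟨fun h => Set.mem_iUnion.2 ⟨T ω, le_rfl, h⟩, fun h => (Set.mem_iUnion.1 h).choose_spec.2⟩
  have hmono : Monotone fun n : ℕ => {ω | T ω ≤ n ∧ M (T ω) ω ≤ a} :=
    fun n n' hnn' ω hω => ⟨hω.1.trans hnn', hω.2⟩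
  have hnonneg : 0 ≤ (max b (c * b) - 1) / (max b (c * b) - a) :=
    div_nonneg (by linarith [le_max_left b (c * b)]) (by linarith [le_max_left b (c * b)])
  rw [measureReal_def, hunion, hmono.measure_iUnion]
  refine ENNReal.toReal_le_of_le_ofReal hnonneg
    (iSup_le fun n => (measure_mono (hA_sub n)).trans ?_)
  exact (ENNReal.le_ofReal_iff_toReal_le (measure_ne_top _ _) hnonneg).2
    (hM.measureReal_stoppedValue_hittingBtwn_le h0 ha hb hc hstep n)

end Stopping

section Termination

lemma pairwise_disjoint_Ioc_mul (L : ℕ) :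
    Pairwise fun i i' =>
      Disjoint (Finset.Ioc (i * L) (i * L + L)) (Finset.Ioc (i' * L) (i' * L + L)) := by
  intro i i' hne
  wlog hlt : i < i' generalizing i i'
  · exact (this hne.symm (by omega)).symm
  have : i * L + L ≤ i' * L := by rw [← Nat.succ_mul]; exact Nat.mul_le_mul_right L hlt
  exact Finset.disjoint_left.2 fun j hj hj' => by
    simp only [Finset.mem_Ioc] at hj hj'; omega

theorem ProbabilityTheory.iIndepFun.measure_exists_block_eq {β : Type*} [MeasurableSpace β]
    [MeasurableSingletonClass β] {C : ℕ → Ω → β} (hmeas : ∀ j, Measurable (C j))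
    (hind : iIndepFun C μ) {b : β} {p : ENNReal} (hp : ∀ j, μ {ω | C j ω = b} = p) (hp0 : p ≠ 0)
    (L : ℕ) : μ {ω | ∃ i, ∀ j ∈ Finset.Ioc (i * L) (i * L + L), C j ω = b} = 1 := by
  have := hind.isProbabilityMeasure
  set A : ℕ → Set Ω := fun i => ⋂ j ∈ Finset.Ioc (i * L) (i * L + L), {ω | C j ω = b}
  have hinter : ∀ u : Finset ℕ, μ (⋂ j ∈ u, {ω | C j ω = b}) = p ^ u.card := fun u => by
    rw [hind.meas_biInter (s := fun j => {ω | C j ω = b})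
      fun j _ => ⟨{b}, measurableSet_singleton b, rfl⟩,
      Finset.prod_congr rfl fun j _ => hp j, Finset.prod_const]
  have hA_meas : ∀ i, MeasurableSet (A i) := fun i =>
    Finset.measurableSet_biInter _ fun j _ => hmeas j (measurableSet_singleton b)
  have hA_prob : ∀ i, μ (A i) = p ^ L := fun i => by
    simp only [A, hinter, Nat.card_Ioc]; congr; omega
  have hA_indep : iIndepSet A μ := by
    refine (iIndepSet_iff_meas_biInter hA_meas).2 fun s => ?_
    rw [← Finset.set_biInter_biUnion, hinter,
      Finset.card_biUnion fun i _ i' _ h => pairwise_disjoint_Ioc_mul L h]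
    simp only [Nat.card_Ioc, add_tsub_cancel_left, Finset.sum_const, smul_eq_mul, hA_prob,
      Finset.prod_const, pow_mul']
  have hA_sum : ∑' i, μ (A i) = ⊤ := by
    simp only [hA_prob]
    exact ENNReal.tsum_const_eq_top_of_ne_zero (pow_ne_zero _ hp0)
  refine le_antisymm prob_le_one ?_
  rw [← measure_limsup_eq_one hA_meas hA_indep hA_sum]
  refine measure_mono fun ω hω => ?_
  obtain ⟨i, hi⟩ := (mem_limsup_iff_frequently_mem.1 hω).exists
  exact ⟨i, fun j hj => Set.mem_iInter₂.1 hi j hj⟩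

theorem measure_exists_partialProd_notMem_Ioo_eq_one {C : ℕ → Ω → ℝ}
    (hmeas : ∀ j, Measurable (C j)) (hind : iIndepFun C μ) {p : ENNReal}
    (hp : ∀ j, μ {ω | C j ω = 1} = p) (hp0 : p ≠ 0) {δ a b : ℝ} (hδ0 : 0 < δ) (hδ1 : δ ≤ 1)
    (ha : 0 < a) (hb : 1 ≤ b) :
    μ {ω | ∃ k, 1 ≤ k ∧ partialProd (fun j ω => 1 - δ * C j ω) k ω ∉ Set.Ioo a b} = 1 := by
  have := hind.isProbabilityMeasure
  obtain ⟨L, hL⟩ := exists_pow_lt_of_lt_one (div_pos ha (by linarith)) (by linarith : 1 - δ < 1)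
  have hbr : b * (1 - δ) ^ (L + 1) ≤ a := by
    have := (lt_div_iff₀' (by linarith : (0 : ℝ) < b)).1 hL
    have : (1 - δ) ^ (L + 1) ≤ (1 - δ) ^ L :=
      pow_le_pow_of_le_one (by linarith) (by linarith) L.le_succ
    nlinarith
  refine le_antisymm prob_le_one
    ((hind.measure_exists_block_eq hmeas hp hp0 (L + 1)).symm.le.trans (measure_mono ?_))
  rintro ω ⟨i, hi⟩
  exact exists_partialProd_notMem_Ioo (m := i * (L + 1)) hb (by linarith) (by omega) hbr
    fun j hj => by simp [hi j hj]

end Termination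

theorem measureReal_partialProd_exit_below_le {C : ℕ → Ω → ℝ} (hmeas : ∀ j, Measurable (C j))
    (hind : iIndepFun C μ) (h1 : ∀ j, μ {ω | C j ω = 1} = 1 / 2)
    (h2 : ∀ j, μ {ω | C j ω = -1} = 1 / 2) {δ a b : ℝ} (hδ0 : 0 ≤ δ) (hδ1 : δ ≤ 1) (ha : a < 1)
    (hb : 1 < b) :
    μ.real {ω | partialProd (fun j ω => 1 - δ * C j ω)
        (sInf {k | 1 ≤ k ∧ partialProd (fun j ω => 1 - δ * C j ω) k ω ∉ Set.Ioo a b}) ω ≤ a} ≤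
      ((1 + δ) * b - 1) / ((1 + δ) * b - a) := by
  have := hind.isProbabilityMeasure
  have hint : ∀ j, Integrable (C j) μ := fun j => integrable_of_fair (hmeas j) (h1 j) (h2 j)
  have hmart := (hind.comp (fun _ x => 1 - δ * x) fun _ => by fun_prop).martingale_partialProd
    (fun j => (by fun_prop : Measurable fun ω => 1 - δ * C j ω).stronglyMeasurable)
    (fun j => (integrable_const 1).sub ((hint j).const_mul δ)) fun j => by
      simp [integral_sub (integrable_const 1) ((hint j).const_mul δ), integral_const_mul,
        integral_eq_zero_of_fair (hmeas j) (h1 j) (h2 j)]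
  have hstep : ∀ᵐ ω ∂μ, ∀ k, partialProd (fun j ω => 1 - δ * C j ω) (k + 1) ω ≤
      (1 + δ) * partialProd (fun j ω => 1 - δ * C j ω) k ω := by
    filter_upwards [ae_all_iff.2 fun j => ae_eq_one_or_eq_neg_one_of_fair (hmeas j) (h1 j) (h2 j)]
      with ω hω
    refine partialProd_succ_le (fun j => ?_) (fun j => ?_) <;>
      rcases hω j with h | h <;> simp only [h] <;> linarith
  have hmax : max b ((1 + δ) * b) = (1 + δ) * b := max_eq_right (by nlinarith)
  simpa [hmax] using hmart.measureReal_exit_below_le (fun _ => partialProd_zero) ha hb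
    (by linarith) hstep

lemma one_le_measureReal_add_of_subset_union [IsFiniteMeasure μ] {s t u : Set Ω} (hs : μ s = 1)
    (hstu : s ⊆ t ∪ u) : 1 ≤ μ.real t + μ.real u :=
  calc 1 = μ.real s := by rw [measureReal_def, hs, ENNReal.toReal_one]
    _ ≤ μ.real t + μ.real u := (measureReal_mono hstu).trans (measureReal_union_le _ _)

end

/-- For the CPDO net capital driven by i.i.d. fair signs with `δ = 0.01`
and `γ = 0.1`, let `τ` be the first toss `k ≥ 1` at which `X k ≤ -γ` (Cash-Out) or
`X k ≥ 1 - γ` (modified Cash-In). Then `τ` is almost surely finite (almost surely some such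
toss exists), the probability of Cash-In satisfies
`P(X τ ≥ 1 - γ) ≤ γ + δ + γδ = 0.111`, and hence the probability of Cash-Out is at least
`0.889`. -/
theorem cpdo_cash_in_probability_bound
    {Ω : Type*} [MeasureSpace Ω] [IsProbabilityMeasure (ℙ : Measure Ω)]
    (δ γ : ℝ) (hδ : δ = 0.01) (hγ : γ = 0.1)
    (C : ℕ → Ω → ℝ)
    (hMeas : ∀ j, Measurable (C j))
    (hIndep : iIndepFun C ℙ)
    (hHead : ∀ j, ℙ {ω | C j ω = 1} = 1/2)
    (hTail : ∀ j, ℙ {ω | C j ω = -1} = 1/2)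
    (X : ℕ → Ω → ℝ)
    (hX : ∀ (k : ℕ) (ω : Ω), X k ω = 1 - ∏ j ∈ Finset.Icc 1 k, (1 - δ * C j ω))
    (τ : Ω → ℕ)
    (hτ : ∀ ω : Ω, τ ω = sInf {k : ℕ | 1 ≤ k ∧ (X k ω ≤ -γ ∨ 1 - γ ≤ X k ω)}) :
    ℙ {ω | ∃ k : ℕ, 1 ≤ k ∧ (X k ω ≤ -γ ∨ 1 - γ ≤ X k ω)} = 1 ∧
    (ℙ {ω | 1 - γ ≤ X (τ ω) ω}).toReal ≤ γ + δ + γ * δ ∧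
    γ + δ + γ * δ = 0.111 ∧
    0.889 ≤ (ℙ {ω | X (τ ω) ω ≤ -γ}).toReal := by
  subst hδ hγ
  set M := partialProd fun j ω => 1 - 0.01 * C j ω
  have hXM : ∀ k ω, X k ω = 1 - M k ω := hX
  have hexit : ∀ k ω, (X k ω ≤ -0.1 ∨ 1 - 0.1 ≤ X k ω) ↔ M k ω ∉ Set.Ioo 0.1 1.1 := by
    intro k ω
    rw [hXM, Set.mem_Ioo, not_and_or, not_lt, not_lt, or_comm]
    constructor <;> rintro (h | h) <;> [left; right; left; right] <;> linarith
  have hτM : ∀ ω, τ ω = sInf {k | 1 ≤ k ∧ M k ω ∉ Set.Ioo 0.1 1.1} := by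
    simp only [hτ, hexit, implies_true]
  have hterm : ℙ {ω | ∃ k, 1 ≤ k ∧ (X k ω ≤ -0.1 ∨ 1 - 0.1 ≤ X k ω)} = 1 := by
    simpa only [hexit] using measure_exists_partialProd_notMem_Ioo_eq_one hMeas hIndep hHead
      (by norm_num) (by norm_num) (by norm_num) (by norm_num) (by norm_num)
  have hcashIn : (ℙ : Measure Ω).real {ω | 1 - 0.1 ≤ X (τ ω) ω} ≤ 0.111 := by
    have hset : {ω | 1 - 0.1 ≤ X (τ ω) ω} =
        {ω | M (sInf {k | 1 ≤ k ∧ M k ω ∉ Set.Ioo 0.1 1.1}) ω ≤ 0.1} := by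
      ext ω
      simp only [Set.mem_ofPred_eq, hXM, ← hτM]
      constructor <;> intro <;> linarith
    rw [hset]
    exact (measureReal_partialProd_exit_below_le hMeas hIndep hHead hTail
      (by norm_num) (by norm_num) (by norm_num) (by norm_num)).trans (by norm_num)
  have hcashOut : 1 ≤ (ℙ : Measure Ω).real {ω | X (τ ω) ω ≤ -0.1} +
      (ℙ : Measure Ω).real {ω | 1 - 0.1 ≤ X (τ ω) ω} :=
    one_le_measureReal_add_of_subset_union hterm fun ω hω =>
      (hτ ω ▸ Nat.sInf_mem hω : τ ω ∈ {k | 1 ≤ k ∧ (X k ω ≤ -0.1 ∨ 1 - 0.1 ≤ X k ω)}).2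
  exact ⟨hterm, hcashIn.trans (by norm_num), by norm_num, by
    change 0.889 ≤ (ℙ : Measure Ω).real _; linarith⟩
end

section
/- Let β = (ln(1+γ) - ln γ)/(ln(1+δ) - ln(1-δ)). Then for every even positive integer k, P(-γ < X_k < 1-γ) < β · √(2/(πk)) · exp(1/(12k)). -/
/-!
Off a null set `∏ (1 - δ C_j) = (1 + δ)^m (1 - δ)^(k - m)`, where `m` is the number of `j` with
`C_j = -1`, and `m` is binomial `(k, 1/2)`. Taking logarithms, the event `γ < ∏ < 1 + γ` confines
`m - k/2` to an open window of length exactly `β ≈ 119.9`, hence to at most 120 consecutive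
integers. Each binomial weight is at most `C(k, k/2) 2^{-k} exp (-(m - k/2)² / k)`, and
`C(k, k/2) 2^{-k} ≤ √(2 / (π k))` by Wallis' inequality. So it suffices that these 120 Gaussian
factors sum to at most `119 < β`: for `k ≤ 60000` they decay enough across the window, and for
larger `k` the window has drifted away from `k/2`, linearly in `k`, because `log (1 - δ²) < 0`.
-/

open MeasureTheory ProbabilityTheory Real Finset

lemma prod_one_sub_mul_eq_pow_mul_pow {ι : Type*} (δ : ℝ) {S : Finset ι} {c : ι → ℝ}
    (hc : ∀ j ∈ S, c j = 1 ∨ c j = -1) :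
    ∏ j ∈ S, (1 - δ * c j) =
      (1 + δ) ^ #{j ∈ S | c j = -1} * (1 - δ) ^ (#S - #{j ∈ S | c j = -1}) := by
  have hcard := card_filter_add_card_filter_not (s := S) (fun j ↦ c j = -1)
  rw [← prod_filter_mul_prod_filter_not S (fun j ↦ c j = -1),
    prod_congr rfl fun j hj ↦ by rw [(mem_filter.mp hj).2], prod_const,
    prod_congr rfl fun j hj ↦ by
      rw [((hc j (mem_filter.mp hj).1).resolve_right (mem_filter.mp hj).2)], prod_const,
    ← hcard, Nat.add_sub_cancel_left]
  ring

section SignSequences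

variable {Ω ι : Type*} [MeasureSpace Ω] [IsProbabilityMeasure (ℙ : Measure Ω)]
  {C : ι → Ω → ℝ}

lemma ae_forall_eq_one_or_eq_neg_one [Countable ι] (hMeas : ∀ j, Measurable (C j))
    (hHead : ∀ j, ℙ {ω | C j ω = 1} = 1 / 2) (hTail : ∀ j, ℙ {ω | C j ω = -1} = 1 / 2) :
    ∀ᵐ ω, ∀ j, C j ω = 1 ∨ C j ω = -1 := by
  refine ae_all_iff.mpr fun j ↦ ?_
  have hmeas (x : ℝ) : MeasurableSet {ω | C j ω = x} := hMeas j (measurableSet_singleton x)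
  have hdisj : Disjoint {ω | C j ω = 1} {ω | C j ω = -1} :=
    Set.disjoint_left.mpr fun ω h1 h2 ↦ by norm_num [Set.mem_ofPred_eq.mp h1] at h2
  refine (ae_iff_measure_eq ((hmeas 1).union (hmeas (-1))).nullMeasurableSet).mpr ?_
  change ℙ ({ω | C j ω = 1} ∪ {ω | C j ω = -1}) = ℙ Set.univ
  rw [measure_union hdisj (hmeas (-1)), hHead, hTail, measure_univ, ENNReal.add_halves]

lemma measure_card_filter_eq_neg_one_le (hMeas : ∀ j, Measurable (C j))
    (hIndep : iIndepFun C ℙ) (hTail : ∀ j, ℙ {ω | C j ω = -1} = 1 / 2) (S : Finset ι)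
    (m : ℕ) :
    ℙ {ω | #{j ∈ S | C j ω = -1} = m} ≤ (#S).choose m * (1 / 2) ^ #S := by
  classical
  let atom (T : Finset ι) : Set Ω :=
    ⋂ j ∈ S, C j ⁻¹' (if j ∈ T then {-1} else {-1}ᶜ)
  have hatom (T : Finset ι) : ℙ (atom T) = (1 / 2) ^ #S := by
    rw [hIndep.measure_inter_preimage_eq_mul S (fun j _ ↦ by split_ifs <;> simp),
      ← prod_const]
    refine prod_congr rfl fun j _ ↦ ?_
    have hm : MeasurableSet (C j ⁻¹' {-1}) := hMeas j (measurableSet_singleton _)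
    split_ifs
    · exact hTail j
    · rw [Set.preimage_compl, prob_compl_eq_one_sub hm,
        show C j ⁻¹' {-1} = {ω | C j ω = -1} from rfl, hTail j, one_div, ENNReal.one_sub_inv_two]
  have hcover : {ω | #{j ∈ S | C j ω = -1} = m} ⊆ ⋃ T ∈ S.powersetCard m, atom T := by
    intro ω hω
    refine Set.mem_biUnion (x := {j ∈ S | C j ω = -1})
      (mem_powersetCard.mpr ⟨filter_subset _ _, hω⟩) (Set.mem_iInter₂.mpr fun j hj ↦ ?_)
    by_cases h : C j ω = -1 <;> simp [hj, h]
  calc ℙ {ω | #{j ∈ S | C j ω = -1} = m}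
      ≤ ∑ T ∈ S.powersetCard m, ℙ (atom T) :=
        (measure_mono hcover).trans (measure_biUnion_finset_le _ _)
    _ = (#S).choose m * (1 / 2) ^ #S := by
        simp only [hatom, sum_const, card_powersetCard, nsmul_eq_mul]

lemma measure_prod_one_sub_mul_mem_le [Countable ι] (hMeas : ∀ j, Measurable (C j))
    (hIndep : iIndepFun C ℙ) (hHead : ∀ j, ℙ {ω | C j ω = 1} = 1 / 2)
    (hTail : ∀ j, ℙ {ω | C j ω = -1} = 1 / 2) (δ : ℝ) (S : Finset ι) (U : Set ℝ)
    [DecidablePred (· ∈ U)] :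
    (ℙ {ω | ∏ j ∈ S, (1 - δ * C j ω) ∈ U}).toReal ≤
      ∑ m ∈ range (#S + 1) with (1 + δ) ^ m * (1 - δ) ^ (#S - m) ∈ U,
        ((#S).choose m : ℝ) * (1 / 2) ^ #S := by
  set M := {m ∈ range (#S + 1) | (1 + δ) ^ m * (1 - δ) ^ (#S - m) ∈ U}
  have hcover : {ω | ∏ j ∈ S, (1 - δ * C j ω) ∈ U} ≤ᵐ[ℙ]
      ⋃ m ∈ M, {ω | #{j ∈ S | C j ω = -1} = m} := by
    filter_upwards [ae_forall_eq_one_or_eq_neg_one hMeas hHead hTail] with ω hω hU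
    change ∏ j ∈ S, (1 - δ * C j ω) ∈ U at hU
    rw [prod_one_sub_mul_eq_pow_mul_pow δ fun j _ ↦ hω j] at hU
    exact Set.mem_biUnion (mem_filter.mpr
      ⟨mem_range.mpr (Nat.lt_succ_of_le (card_filter_le _ _)), hU⟩) rfl
  have hle : ℙ {ω | ∏ j ∈ S, (1 - δ * C j ω) ∈ U} ≤
      ∑ m ∈ M, ((#S).choose m : ENNReal) * (1 / 2) ^ #S :=
    (measure_mono_ae hcover).trans <| (measure_biUnion_finset_le _ _).trans <|
      sum_le_sum fun m _ ↦ measure_card_filter_eq_neg_one_le hMeas hIndep hTail S m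
  have hfin (m : ℕ) : ((#S).choose m : ENNReal) * (1 / 2) ^ #S ≠ ⊤ := by finiteness
  refine (ENNReal.toReal_mono (ENNReal.sum_ne_top.mpr fun m _ ↦ hfin m) hle).trans_eq ?_
  rw [ENNReal.toReal_sum fun m _ ↦ hfin m]
  simp

end SignSequences

namespace Nat

lemma pi_mul_centralBinom_sq_le (n : ℕ) : π * n * (centralBinom n : ℝ) ^ 2 ≤ 16 ^ n := by
  have hfac : ((2 * n)! : ℝ) = centralBinom n * n ! ^ 2 := by
    rw [centralBinom_eq_two_mul_choose, two_mul, ← add_choose_mul_factorial_mul_factorial]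
    push_cast; ring
  have hW : (2 * n + 1) / (2 * n + 2) * (π / 2) ≤
      16 ^ n / (centralBinom n ^ 2 * (2 * n + 1)) := by
    convert Wallis.le_W n using 1
    rw [Wallis.W_eq_factorial_ratio, hfac, pow_mul]
    field_simp
    norm_num
  have hC : (0 : ℝ) < centralBinom n := by exact_mod_cast centralBinom_pos n
  rw [_root_.div_mul_div_comm, div_le_div_iff₀ (by positivity) (by positivity)] at hW
  nlinarith [pi_pos, sq_nonneg (centralBinom n : ℝ)]

lemma centralBinom_div_four_pow_le {n : ℕ} (hn : 0 < n) :
    (centralBinom n : ℝ) / 4 ^ n ≤ √(1 / (π * n)) := by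
  have h16 : ((4 : ℝ) ^ n) ^ 2 = 16 ^ n := by rw [← pow_mul, mul_comm, pow_mul]; norm_num
  rw [Real.le_sqrt (by positivity) (by positivity), div_pow, h16, le_div_iff₀ (by positivity),
    div_mul_eq_mul_div, div_le_iff₀ (by positivity)]
  simpa [mul_comm, mul_left_comm, mul_assoc] using pi_mul_centralBinom_sq_le n

lemma choose_add_le_centralBinom_mul_exp {n : ℕ} (hn : 0 < n) (j : ℕ) :
    ((2 * n).choose (n + j) : ℝ) ≤ centralBinom n * exp (-j ^ 2 / (2 * n)) := by
  induction j with
  | zero => simp [centralBinom_eq_two_mul_choose]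
  | succ j ih =>
    rcases le_or_gt n j with hj | hj
    · rw [choose_eq_zero_of_lt (by omega), Nat.cast_zero]
      positivity
    have hjn : (j : ℝ) + 1 ≤ n := by exact_mod_cast hj
    have hrec : ((2 * n).choose (n + (j + 1)) : ℝ) * (n + j + 1) =
        (2 * n).choose (n + j) * (n - j) := by
      have h := congrArg (Nat.cast (R := ℝ)) (choose_succ_right_eq (2 * n) (n + j))
      rw [show 2 * n - (n + j) = n - j by omega] at h
      push_cast [Nat.cast_sub hj.le] at h
      rw [← add_assoc, h]
    have hratio : ((n : ℝ) - j) / (n + j + 1) ≤ exp (-((2 * j + 1) / (2 * n))) := by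
      refine le_trans ?_ (one_sub_le_exp_neg _)
      rw [div_le_iff₀ (by positivity), sub_mul, div_mul_eq_mul_div, le_sub_iff_add_le,
        ← le_sub_iff_add_le', div_le_iff₀ (by positivity)]
      nlinarith
    calc ((2 * n).choose (n + (j + 1)) : ℝ)
        = (2 * n).choose (n + j) * ((n - j) / (n + j + 1)) := by
          rw [mul_div_assoc', eq_div_iff (by positivity), hrec]
      _ ≤ centralBinom n * exp (-j ^ 2 / (2 * n)) * exp (-((2 * j + 1) / (2 * n))) :=
          mul_le_mul ih hratio (div_nonneg (by linarith) (by positivity)) (by positivity)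
      _ = centralBinom n * exp (-((j + 1 : ℕ) : ℝ) ^ 2 / (2 * n)) := by
          rw [mul_assoc, ← exp_add]
          congr 2
          push_cast
          field_simp
          ring

lemma choose_le_centralBinom_mul_exp {n : ℕ} (hn : 0 < n) (m : ℕ) :
    ((2 * n).choose m : ℝ) ≤ centralBinom n * exp (-((m : ℝ) - n) ^ 2 / (2 * n)) := by
  rcases le_or_gt n m with h | h
  · obtain ⟨j, rfl⟩ := exists_add_of_le h
    simpa using choose_add_le_centralBinom_mul_exp hn j
  · rw [← choose_symm (by omega), show 2 * n - m = n + (n - m) by omega]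
    convert choose_add_le_centralBinom_mul_exp hn (n - m) using 4
    push_cast [h.le]
    ring

lemma sum_choose_le_centralBinom_mul_sum_range {n : ℕ} (hn : 0 < n) {M : Finset ℕ} {t : ℤ}
    {N : ℕ} (hM : ∀ m ∈ M, t ≤ (m : ℤ) - n ∧ (m : ℤ) - n < t + N) :
    ∑ m ∈ M, ((2 * n).choose m : ℝ) ≤
      centralBinom n * ∑ i ∈ range N, exp (-((t + i : ℤ) : ℝ) ^ 2 / (2 * n)) := by
  set g : ℤ → ℝ := fun j ↦ exp (-(j : ℝ) ^ 2 / (2 * n))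
  calc ∑ m ∈ M, ((2 * n).choose m : ℝ)
      ≤ ∑ m ∈ M, centralBinom n * g (m - n) :=
        sum_le_sum fun m _ ↦ by simpa [g] using choose_le_centralBinom_mul_exp hn m
    _ = centralBinom n * ∑ j ∈ M.image (fun m : ℕ ↦ (m : ℤ) - n), g j := by
        rw [mul_sum, sum_image fun a _ b _ h ↦ by simpa using h]
    _ ≤ centralBinom n * ∑ j ∈ Ico t (t + N), g j := by
        gcongr
        intro j hj
        obtain ⟨m, hm, rfl⟩ := mem_image.mp hj
        exact mem_Ico.mpr (hM m hm)
    _ = centralBinom n * ∑ i ∈ range N, g (t + i) := by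
        rw [Int.Ico_eq_finset_map, sum_map]
        simp

end Nat

lemma sum_range_shift_add_one_add (f : ℤ → ℝ) (N : ℕ) (t : ℤ) :
    ∑ i ∈ range N, f (t + 1 + i) + f t = ∑ i ∈ range N, f (t + i) + f (t + N) := by
  rw [← sum_range_succ, sum_range_succ']
  push_cast
  simp only [add_assoc, add_comm (1 : ℤ), add_zero]

lemma sum_range_shift_le_sum_range_centered {f : ℤ → ℝ} (hf : ∀ i j, |i| ≤ |j| → f j ≤ f i)
    (w : ℕ) (t : ℤ) : ∑ i ∈ range (2 * w), f (t + i) ≤ ∑ i ∈ range (2 * w), f (i - w) := by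
  set S : ℤ → ℝ := fun t ↦ ∑ i ∈ range (2 * w), f (t + i)
  have hstep (t : ℤ) := sum_range_shift_add_one_add f (2 * w) t
  rw [show ∑ i ∈ range (2 * w), f (i - w) = S (-w) by simp only [S, neg_add_eq_sub]]
  rcases le_total (-w : ℤ) t with h | h
  · induction t, h using Int.leInduction with
    | base => rfl
    | succ t ht ih =>
      have := hf t (t + (2 * w : ℕ)) (abs_le_abs (by omega) (by omega))
      linarith [hstep t]
  · induction t, h using Int.leInductionDown with
    | base => rfl
    | pred t ht ih =>
      have := hf (t - 1 + (2 * w : ℕ)) (t - 1) (by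
        rw [abs_sub_comm t]; exact abs_le_abs (by omega) (by omega))
      have h := hstep (t - 1)
      rw [sub_add_cancel] at h
      linarith

lemma exp_neg_le_inv_one_add {x : ℝ} (hx : 0 ≤ x) : exp (-x) ≤ (1 + x)⁻¹ := by
  rw [exp_neg]
  exact inv_anti₀ (by positivity) (by linarith [add_one_le_exp x])

lemma exp_neg_sq_div_le_inv_one_add {c : ℝ} (hc : 0 < c) (x : ℝ) :
    exp (-x ^ 2 / c) ≤ (1 + x ^ 2 / c)⁻¹ := by
  rw [neg_div]
  exact exp_neg_le_inv_one_add (by positivity)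

lemma sum_range_exp_neg_sq_div_le_of_le_60000 {c : ℝ} (hc : 0 < c) (hc' : c ≤ 60000) (t : ℤ) :
    ∑ i ∈ range 120, exp (-((t + i : ℤ) : ℝ) ^ 2 / c) ≤ 119 := by
  have hf (i j : ℤ) (hij : |i| ≤ |j|) : exp (-(j : ℝ) ^ 2 / c) ≤ exp (-(i : ℝ) ^ 2 / c) := by
    refine exp_le_exp.mpr (div_le_div_of_nonneg_right (neg_le_neg ?_) hc.le)
    exact sq_le_sq.mpr (by exact_mod_cast hij)
  calc ∑ i ∈ range 120, exp (-((t + i : ℤ) : ℝ) ^ 2 / c)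
      ≤ ∑ i ∈ range (2 * 60), exp (-(((i : ℤ) - (60 : ℕ) : ℤ) : ℝ) ^ 2 / c) :=
        sum_range_shift_le_sum_range_centered (f := fun j : ℤ ↦ exp (-(j : ℝ) ^ 2 / c)) hf 60 t
    _ ≤ ∑ i ∈ range 120, (1 + ((i : ℝ) - 60) ^ 2 / 60000)⁻¹ := by
        refine sum_le_sum fun i _ ↦ (exp_neg_sq_div_le_inv_one_add hc _).trans ?_
        push_cast
        gcongr
    _ ≤ 119 := by norm_num [sum_range_succ]

lemma sum_range_exp_neg_sq_div_le_of_nonneg {c : ℝ} (hc : 0 < c) {t : ℤ} (ht : 0 ≤ t) (N : ℕ) :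
    ∑ i ∈ range N, exp (-((t + i : ℤ) : ℝ) ^ 2 / c) ≤ N * (1 + (t : ℝ) ^ 2 / c)⁻¹ := by
  have ht' : (0 : ℝ) ≤ t := by exact_mod_cast ht
  have hterm (i : ℕ) : exp (-((t + i : ℤ) : ℝ) ^ 2 / c) ≤ (1 + (t : ℝ) ^ 2 / c)⁻¹ := by
    refine (exp_neg_sq_div_le_inv_one_add hc _).trans ?_
    gcongr
    nlinarith [i.cast_nonneg (α := ℝ)]
  simpa using sum_le_card_nsmul (range N) _ _ fun i _ ↦ hterm i

lemma log_eleven_lt : log 11 < 12 / 5 := by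
  rw [log_lt_iff_lt_exp (by norm_num)]
  refine lt_of_pow_lt_pow_left₀ 5 (exp_pos _).le ?_
  rw [← exp_nat_mul, show ((5 : ℕ) : ℝ) * (12 / 5) = (12 : ℕ) by norm_num, ← exp_one_pow]
  calc (11 : ℝ) ^ 5 < 2.7182818283 ^ 12 := by norm_num
    _ < exp 1 ^ 12 := pow_lt_pow_left₀ exp_one_gt_d9 (by norm_num) (by norm_num)

lemma lt_log_eleven : 67 / 28 < log 11 := by
  rw [lt_log_iff_exp_lt (by norm_num)]
  refine lt_of_pow_lt_pow_left₀ 28 (by norm_num) ?_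
  rw [← exp_nat_mul, show ((28 : ℕ) : ℝ) * (67 / 28) = (67 : ℕ) by norm_num, ← exp_one_pow]
  calc exp 1 ^ 67 < 2.7182818286 ^ 67 :=
        pow_lt_pow_left₀ exp_one_lt_d9 (by positivity) (by norm_num)
    _ < 11 ^ 28 := by norm_num

lemma two_mul_le_log_one_add_sub_log_one_sub {x : ℝ} (hx0 : 0 ≤ x) (hx1 : x < 1) :
    2 * x ≤ log (1 + x) - log (1 - x) := by
  have hs := hasSum_log_sub_log_of_abs_lt_one (by rwa [abs_of_nonneg hx0])
  simpa using le_hasSum hs 0 fun k _ ↦ by positivity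

lemma log_one_add_sub_log_one_sub_le {x : ℝ} (hx0 : 0 ≤ x) (hx1 : x < 1) :
    log (1 + x) - log (1 - x) ≤ x + x / (1 - x) := by
  have hx : 0 < 1 - x := by linarith
  have h1 := log_le_sub_one_of_pos (show 0 < 1 + x by linarith)
  have h2 := one_sub_inv_le_log_of_pos hx
  have h3 : 1 - (1 - x)⁻¹ = -(x / (1 - x)) := by field_simp; ring
  linarith

lemma log_pow_mul_pow_eq {δ : ℝ} (hδ0 : 0 < δ) (hδ1 : δ < 1) {n m : ℕ} (hm : m ≤ 2 * n) :
    log ((1 + δ) ^ m * (1 - δ) ^ (2 * n - m)) =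
      n * log (1 - δ ^ 2) + (m - n) * (log (1 + δ) - log (1 - δ)) := by
  have h1 : 0 < 1 - δ := by linarith
  rw [log_mul (by positivity) (by positivity), log_pow, log_pow,
    show 1 - δ ^ 2 = (1 + δ) * (1 - δ) by ring, log_mul (by positivity) h1.ne', Nat.cast_sub hm]
  push_cast
  ring

lemma sub_mem_Ioo_of_pow_mul_pow_mem_Ioo {δ γ : ℝ} (hδ0 : 0 < δ) (hδ1 : δ < 1) (hγ : 0 < γ)
    {n m : ℕ} (hm : m ≤ 2 * n) (h : (1 + δ) ^ m * (1 - δ) ^ (2 * n - m) ∈ Set.Ioo γ (1 + γ)) :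
    (log γ - n * log (1 - δ ^ 2)) / (log (1 + δ) - log (1 - δ)) < m - n ∧
      (m - n : ℝ) < (log γ - n * log (1 - δ ^ 2)) / (log (1 + δ) - log (1 - δ)) +
        (log (1 + γ) - log γ) / (log (1 + δ) - log (1 - δ)) := by
  have hs : 0 < log (1 + δ) - log (1 - δ) := by
    linarith [two_mul_le_log_one_add_sub_log_one_sub hδ0.le hδ1]
  have hlo := log_lt_log hγ h.1
  have hhi := log_lt_log (hγ.trans h.1) h.2
  rw [log_pow_mul_pow_eq hδ0 hδ1 hm] at hlo hhi
  rw [← add_div, div_lt_iff₀ hs, lt_div_iff₀ hs]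
  constructor <;> linarith

namespace CPDO

lemma log_spread_mem_Icc :
    log (1 + 0.01) - log (1 - 0.01) ∈ Set.Icc 0.02 (199 / 9900) :=
  ⟨by linarith [two_mul_le_log_one_add_sub_log_one_sub (x := 0.01) (by norm_num) (by norm_num)],
    by linarith [log_one_add_sub_log_one_sub_le (x := 0.01) (by norm_num) (by norm_num)]⟩

lemma log_ratio_mem_Ioo :
    (log (1 + 0.1) - log 0.1) / (log (1 + 0.01) - log (1 - 0.01)) ∈ Set.Ioo 119 120 := by
  obtain ⟨hs, hs'⟩ := log_spread_mem_Icc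
  rw [← log_div (by norm_num) (by norm_num), Set.mem_Ioo, lt_div_iff₀ (by linarith),
    div_lt_iff₀ (by linarith)]
  norm_num
  constructor <;> nlinarith [log_eleven_lt, lt_log_eleven]

lemma exists_window (n : ℕ) :
    ∃ t : ℤ, ((2 * n : ℝ) ≤ 60000 ∨ 0 ≤ t ∧ (2 * n : ℝ) ≤ 119 * t ^ 2) ∧
      ∀ m ≤ 2 * n, (1 + 0.01 : ℝ) ^ m * (1 - 0.01) ^ (2 * n - m) ∈ Set.Ioo 0.1 (1 + 0.1) →
        t ≤ (m : ℤ) - n ∧ (m : ℤ) - n < t + 120 := by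
  obtain ⟨hs, hs'⟩ := log_spread_mem_Icc
  set s := log (1 + 0.01) - log (1 - 0.01)
  -- the left end of the window of admissible `m - n`; it grows linearly in `n` since
  -- `log (1 - δ²) ≤ -δ²`
  set a := (log 0.1 - n * log (1 - 0.01 ^ 2)) / s
  have hat : a < ((⌊a⌋ + 1 : ℤ) : ℝ) := by push_cast; exact Int.lt_floor_add_one a
  refine ⟨⌊a⌋ + 1, ?_, fun m hm hmem ↦ ?_⟩
  · rcases le_or_gt (2 * n : ℝ) 60000 with h | h
    · exact .inl h
    have hlog : log (1 - 0.01 ^ 2) ≤ -0.0001 := by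
      linarith [log_le_sub_one_of_pos (show (0 : ℝ) < 1 - 0.01 ^ 2 by norm_num)]
    have hlog10 : -2.4 < log 0.1 := by
      rw [show (0.1 : ℝ) = 10⁻¹ by norm_num, log_inv]
      linarith [log_eleven_lt, log_lt_log (by norm_num) (show (10 : ℝ) < 11 by norm_num)]
    set L : ℝ := (n / 10000 - 2.4) / (199 / 9900)
    have hL : 29 < L := by rw [lt_div_iff₀ (by norm_num)]; linarith
    have hLt : L < ((⌊a⌋ + 1 : ℤ) : ℝ) :=
      (div_le_div₀ (by nlinarith) (by nlinarith) (by linarith) hs').trans_lt hat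
    refine .inr ⟨by exact_mod_cast (show (0 : ℝ) < 29 by norm_num).trans (hL.trans hLt) |>.le, ?_⟩
    calc (2 * n : ℝ) ≤ 119 * L ^ 2 := by
          have hLdef : L * (199 / 9900) = n / 10000 - 2.4 := div_mul_cancel₀ _ (by norm_num)
          nlinarith
      _ ≤ 119 * ((⌊a⌋ + 1 : ℤ) : ℝ) ^ 2 := by gcongr
  · have hwin : a < (m : ℝ) - n ∧ (m : ℝ) - n < a + (log (1 + 0.1) - log 0.1) / s :=
      sub_mem_Ioo_of_pow_mul_pow_mem_Ioo (by norm_num) (by norm_num) (by norm_num) hm hmem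
    have hβ : (log (1 + 0.1) - log 0.1) / s < 120 := log_ratio_mem_Ioo.2
    constructor
    · have : ⌊a⌋ < (m : ℤ) - n := Int.floor_lt.mpr (by push_cast; exact hwin.1)
      omega
    · have : (((m : ℤ) - n : ℤ) : ℝ) < ((⌊a⌋ + 1 + 120 : ℤ) : ℝ) := by
        push_cast at hat ⊢
        linarith [hwin.2]
      exact_mod_cast this

lemma sum_choose_mul_half_pow_lt {n : ℕ} (hn : 0 < n) :
    ∑ m ∈ range (2 * n + 1) with
        (1 + 0.01 : ℝ) ^ m * (1 - 0.01) ^ (2 * n - m) ∈ Set.Ioo 0.1 (1 + 0.1),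
      ((2 * n).choose m : ℝ) * (1 / 2) ^ (2 * n) <
    (log (1 + 0.1) - log 0.1) / (log (1 + 0.01) - log (1 - 0.01)) * √(1 / (π * n)) := by
  obtain ⟨t, ht, hwindow⟩ := exists_window n
  set W := ∑ i ∈ range 120, exp (-((t + i : ℤ) : ℝ) ^ 2 / (2 * n))
  have hW : W ≤ 119 := by
    rcases ht with hsmall | ⟨ht, hfar⟩
    · exact sum_range_exp_neg_sq_div_le_of_le_60000 (by positivity) hsmall t
    refine (sum_range_exp_neg_sq_div_le_of_nonneg (by positivity) ht 120).trans ?_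
    have : 1 / 119 ≤ (t : ℝ) ^ 2 / (2 * n) := by
      rw [div_le_div_iff₀ (by norm_num) (by positivity)]
      linarith
    calc ((120 : ℕ) : ℝ) * (1 + (t : ℝ) ^ 2 / (2 * n))⁻¹ ≤ 120 * (1 + 1 / 119)⁻¹ := by
          push_cast; gcongr
      _ = 119 := by norm_num
  have h4 : ((1 : ℝ) / 2) ^ (2 * n) = 1 / 4 ^ n := by
    rw [pow_mul, ← one_div_pow]
    norm_num
  calc _ = (∑ m ∈ range (2 * n + 1) with
          (1 + 0.01 : ℝ) ^ m * (1 - 0.01) ^ (2 * n - m) ∈ Set.Ioo 0.1 (1 + 0.1),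
        ((2 * n).choose m : ℝ)) / 4 ^ n := by
        rw [← sum_mul, h4, mul_one_div]
    _ ≤ Nat.centralBinom n / 4 ^ n * W := by
        rw [div_mul_eq_mul_div]
        gcongr
        exact Nat.sum_choose_le_centralBinom_mul_sum_range hn fun m hm ↦
          hwindow m (Nat.lt_succ_iff.mp (mem_range.mp (mem_filter.mp hm).1)) (mem_filter.mp hm).2
    _ ≤ √(1 / (π * n)) * 119 := by
        gcongr
        exact Nat.centralBinom_div_four_pow_le hn
    _ < _ := by
        rw [mul_comm]
        gcongr
        exact log_ratio_mem_Ioo.1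

end CPDO

/-- For the CPDO net capital driven by i.i.d. fair signs with `δ = 0.01`
and `γ = 0.1`, let `β = (ln(1+γ) - ln γ)/(ln(1+δ) - ln(1-δ))`. Then for every even positive
integer `k`, `P(-γ < X k < 1-γ) < β · √(2/(πk)) · exp(1/(12k))`. -/
theorem cpdo_continuation_probability_bound
    {Ω : Type*} [MeasureSpace Ω] [IsProbabilityMeasure (ℙ : Measure Ω)]
    (δ γ : ℝ) (hδ : δ = 0.01) (hγ : γ = 0.1)
    (C : ℕ → Ω → ℝ)
    (hMeas : ∀ j, Measurable (C j))
    (hIndep : iIndepFun C ℙ)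
    (hHead : ∀ j, ℙ {ω | C j ω = 1} = 1/2)
    (hTail : ∀ j, ℙ {ω | C j ω = -1} = 1/2)
    (X : ℕ → Ω → ℝ)
    (hX : ∀ (k : ℕ) (ω : Ω), X k ω = 1 - ∏ j ∈ Finset.Icc 1 k, (1 - δ * C j ω))
    (β : ℝ)
    (hβ : β = (Real.log (1 + γ) - Real.log γ) / (Real.log (1 + δ) - Real.log (1 - δ))) :
    ∀ k : ℕ, 0 < k → Even k →
      (ℙ {ω | -γ < X k ω ∧ X k ω < 1 - γ}).toReal
        < β * Real.sqrt (2 / (Real.pi * k)) * Real.exp (1 / (12 * k)) := by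
  rintro k hk ⟨n, rfl⟩
  subst hδ hγ hβ
  rw [← two_mul] at hk ⊢
  have hevent : {ω | -0.1 < X (2 * n) ω ∧ X (2 * n) ω < 1 - 0.1} =
      {ω | ∏ j ∈ Icc 1 (2 * n), (1 - 0.01 * C j ω) ∈ Set.Ioo 0.1 (1 + 0.1)} := by
    ext ω
    simp only [Set.mem_ofPred_eq, hX, Set.mem_Ioo]
    constructor <;> rintro ⟨h1, h2⟩ <;> constructor <;> linarith
  have hprob := measure_prod_one_sub_mul_mem_le hMeas hIndep hHead hTail 0.01 (Icc 1 (2 * n))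
    (Set.Ioo 0.1 (1 + 0.1))
  rw [Nat.card_Icc, Nat.add_sub_cancel, ← hevent] at hprob
  have hsqrt : √(2 / (π * (2 * n : ℕ))) = √(1 / (π * n)) := by
    congr 1
    push_cast
    field_simp
  calc _ ≤ _ := hprob
    _ < _ := CPDO.sum_choose_mul_half_pow_lt (by omega)
    _ ≤ _ := by
        rw [hsqrt]
        exact le_mul_of_one_le_right
          (mul_nonneg (by linarith [CPDO.log_ratio_mem_Ioo.1]) (sqrt_nonneg _))
          (one_le_exp (by positivity))
end
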